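/- arXiv:2306.10473 — 8 statements merged into one kernel-verified Lean document; each statement's English description precedes it below -/
import Mathlib

section
/- (Representation theorem for 2D-Shapley, uniqueness.) Let n, m ≥ 1, N = {1,…,n}, M = {1,…,m}, and let ψ assign to every utility function h : 2^N × 2^M → ℝ a real matrix (ψ_{ij}(h))_{i∈N, j∈M}. Suppose ψ satisfies: (2D-linearity) ψ_{ij}(β₁h₁ + β₂h₂) = β₁ψ_{ij}(h₁) + β₂ψ_{ij}(h₂) for all utility functions h₁, h₂ and all β₁, β₂ ∈ ℝ; (2D-dummy) if M_h^{i,j}(S,F) = c for all S ⊆ N∖{i}, F ⊆ M∖{j}, then ψ_{ij}(h) = c; (2D-symmetry) ψ_{π₁(i),π₂(j)}((π₁π₂)h) = ψ_{ij}(h) for all permutations π₁ of N and π₂ of M, where [(π₁π₂)h](S,F) := h(π₁(S), π₂(F)); and (2D-efficiency) Σ_{i∈N} Σ_{j∈M} ψ_{ij}(h) = h(N,M) for all h. Then necessarily ψ_{ij}(h) = Σ_{S ⊆ N∖{i}} Σ_{F ⊆ M∖{j}} [|S|!(n−|S|−1)!/n!] · [|F|!(m−|F|−1)!/m!] · M_h^{i,j}(S,F)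 for every h, i, j. -/
open Finset Nat

/-- Marginal contribution of block `(i,j)` to `(S,F)`:
`M_h^{i,j}(S,F) = h(S∪{i}, F∪{j}) + h(S,F) − h(S∪{i}, F) − h(S, F∪{j})`. -/
noncomputable def margin {n m : ℕ} (h : Finset (Fin n) → Finset (Fin m) → ℝ)
    (i : Fin n) (j : Fin m) (S : Finset (Fin n)) (F : Finset (Fin m)) : ℝ :=
  h (insert i S) (insert j F) + h S F - h (insert i S) F - h S (insert j F)

/-- Shapley weight `s!(n−s−1)!/n!`. -/
noncomputable def shapWeight (n s : ℕ) : ℝ := (s ! * (n - s - 1)! : ℕ) / (n ! : ℕ)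

/-- The two-dimensional Shapley value
`ψ²ᵈ_{ij}(h) = Σ_{S ⊆ N∖{i}} Σ_{F ⊆ M∖{j}} [|S|!(n−|S|−1)!/n!]·[|F|!(m−|F|−1)!/m!]·M_h^{i,j}(S,F)`. -/
noncomputable def psi2d {n m : ℕ} (h : Finset (Fin n) → Finset (Fin m) → ℝ)
    (i : Fin n) (j : Fin m) : ℝ :=
  ∑ S ∈ (univ \ {i}).powerset, ∑ F ∈ (univ \ {j}).powerset,
    shapWeight n S.card * shapWeight m F.card * margin h i j S F

/-!
Both `ψ` and the 2D-Shapley value are linear in `h`, so it suffices that they agree on the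
unanimity games `u_{T,G}(S,F) = [T ⊆ S]·[G ⊆ F]`, which span all utility functions by Möbius
inversion in each coordinate. On `u_{T,G}`, dummy kills every block outside `T × G`, symmetry
makes `ψ` constant on `T × G`, and efficiency forces that constant to be `1/(|T||G|)`.
On the other side, the 2D-Shapley value of a product game `v(S)·w(F)` is the product of the
one-dimensional Shapley values, and the value `1/|T|` of a unanimity game comes from the identity
`(a+1) Σ_k C(b,k) (a+k)! (b-k)! = (a+b+1)!`, a form of the hockey-stick identity.
-/

namespace Finset

variable {α : Type*} [DecidableEq α]

theorem sum_Icc_eq_sum_powerset_sdiff {M : Type*} [AddCommMonoid M] {s t : Finset α}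
    (hst : s ⊆ t) (f : Finset α → M) :
    ∑ u ∈ Icc s t, f u = ∑ v ∈ (t \ s).powerset, f (s ∪ v) := by
  rw [Icc_eq_image_powerset hst, sum_image]
  intro v hv w hw hvw
  rw [mem_coe, mem_powerset] at hv hw
  rw [← union_sdiff_cancel_left (disjoint_of_subset_right hv disjoint_sdiff),
    ← union_sdiff_cancel_left (disjoint_of_subset_right hw disjoint_sdiff)]
  exact congrArg (· \ s) hvw

theorem sum_Icc_neg_one_pow_card_sdiff {R : Type*} [Ring R] {s t : Finset α} (hst : s ⊆ t) :
    ∑ u ∈ Icc s t, (-1 : R) ^ #(u \ s) = if s = t then 1 else 0 := by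
  rw [sum_Icc_eq_sum_powerset_sdiff hst]
  have hcancel : ∀ v ∈ (t \ s).powerset, (-1 : R) ^ #((s ∪ v) \ s) = (-1 : R) ^ #v :=
    fun v hv => by
      rw [union_sdiff_cancel_left (disjoint_of_subset_right (mem_powerset.1 hv) disjoint_sdiff)]
  rw [sum_congr rfl hcancel]
  have := congrArg (Int.cast : ℤ → R) (sum_powerset_neg_one_pow_card (x := t \ s))
  push_cast at this
  rw [this]
  exact if_congr (sdiff_eq_empty_iff_subset.trans
    ⟨fun hts => subset_antisymm hst hts, fun h => h ▸ subset_rfl⟩) rfl rfl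

theorem sum_powerset_sum_powerset_neg_one_pow {R : Type*} [Ring R] (f : Finset α → R)
    (s : Finset α) :
    ∑ t ∈ s.powerset, ∑ u ∈ t.powerset, (-1 : R) ^ #(t \ u) * f u = f s := by
  rw [sum_comm' (t' := s.powerset) (s' := fun u => Icc u s) (fun t u => by
    simp only [mem_powerset, mem_Icc]
    exact ⟨fun h => ⟨⟨h.2, h.1⟩, h.2.trans h.1⟩, fun h => ⟨h.1.2, h.1.1⟩⟩)]
  simp_rw [← sum_mul]
  rw [sum_congr rfl fun u hu => by rw [sum_Icc_neg_one_pow_card_sdiff (mem_powerset.1 hu)]]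
  simp

theorem image_swap_of_mem {s : Finset α} {a b : α} (ha : a ∈ s) (hb : b ∈ s) :
    s.image (Equiv.swap a b) = s := by
  refine eq_of_subset_of_card_le (fun x hx => ?_) (card_image_of_injective _ (Equiv.injective _)).ge
  obtain ⟨y, hy, rfl⟩ := mem_image.1 hx
  rw [Equiv.swap_apply_def]
  split_ifs <;> assumption

theorem sum_ite_subset [Fintype α] {M : Type*} [AddCommMonoid M] (s : Finset α)
    (f : Finset α → M) : ∑ t, (if t ⊆ s then f t else 0) = ∑ t ∈ s.powerset, f t := by
  rw [← sum_filter, filter_subset_univ]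

end Finset

section UnanimityGame

variable {α β R : Type*} [DecidableEq α] [DecidableEq β]

def unanimityGame [Zero R] [One R] (T S : Finset α) : R := if T ⊆ S then 1 else 0

def unanimityGame₂ [MulZeroOneClass R] (T : Finset α) (G : Finset β) :
    Finset α → Finset β → R :=
  fun S F => unanimityGame T S * unanimityGame G F

theorem unanimityGame_insert_of_notMem [Zero R] [One R] {T : Finset α} {i : α} (hi : i ∉ T)
    (S : Finset α) : (unanimityGame T (insert i S) : R) = unanimityGame T S := by
  simp only [unanimityGame, subset_insert_iff_of_notMem hi]

theorem unanimityGame_image_of_image_eq [Zero R] [One R] {T : Finset α} {π : Equiv.Perm α}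
    (hT : T.image π = T) (S : Finset α) :
    (unanimityGame T (S.image π) : R) = unanimityGame T S := by
  refine if_congr ?_ rfl rfl
  rw [← image_subset_image_iff π.injective (s := T) (t := S), hT]

def unanimityCoeff [Ring R] (h : Finset α → Finset β → R) (T : Finset α) (G : Finset β) :
    R :=
  ∑ A ∈ T.powerset, (-1 : R) ^ #(T \ A) * ∑ B ∈ G.powerset, (-1 : R) ^ #(G \ B) * h A B

theorem sum_powerset_sum_powerset_unanimityCoeff [Ring R] (h : Finset α → Finset β → R)
    (S : Finset α) (F : Finset β) :
    ∑ T ∈ S.powerset, ∑ G ∈ F.powerset, unanimityCoeff h T G = h S F := by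
  have hinner : ∀ T : Finset α, ∑ G ∈ F.powerset, unanimityCoeff h T G
      = ∑ A ∈ T.powerset, (-1 : R) ^ #(T \ A) * h A F := fun T => by
    simp only [unanimityCoeff]
    rw [sum_comm]
    simp_rw [← mul_sum]
    exact sum_congr rfl fun A _ => by rw [sum_powerset_sum_powerset_neg_one_pow (h A) F]
  simp only [hinner]
  exact sum_powerset_sum_powerset_neg_one_pow (h · F) S

theorem sum_unanimityCoeff_smul_unanimityGame₂ [Fintype α] [Fintype β] [Ring R]
    (h : Finset α → Finset β → R) :
    ∑ T : Finset α, ∑ G : Finset β, unanimityCoeff h T G • unanimityGame₂ T G = h := by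
  funext S F
  simp only [Finset.sum_apply, Pi.smul_apply, smul_eq_mul, unanimityGame₂, unanimityGame,
    mul_ite, mul_one, mul_zero, sum_ite_subset, sum_ite_irrel, sum_const_zero]
  exact sum_powerset_sum_powerset_unanimityCoeff h S F

theorem LinearMap.ext_unanimityGame₂ [Fintype α] [Fintype β] [CommRing R] {M : Type*}
    [AddCommMonoid M] [Module R M] {L₁ L₂ : (Finset α → Finset β → R) →ₗ[R] M}
    (hL : ∀ T G, L₁ (unanimityGame₂ T G) = L₂ (unanimityGame₂ T G)) : L₁ = L₂ := by
  refine LinearMap.ext fun h => ?_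
  rw [← sum_unanimityCoeff_smul_unanimityGame₂ h]
  simp only [map_sum, map_smul, hL]

end UnanimityGame

def LinearMap.ofLinearCombination {X Y R : Type*} [CommSemiring R] (Φ : (X → Y → R) → R)
    (hΦ : ∀ (h₁ h₂ : X → Y → R) (β₁ β₂ : R),
      Φ (fun S F => β₁ * h₁ S F + β₂ * h₂ S F) = β₁ * Φ h₁ + β₂ * Φ h₂) :
    (X → Y → R) →ₗ[R] R where
  toFun := Φ
  map_add' h₁ h₂ := by
    have := hΦ h₁ h₂ 1 1
    simp only [one_mul] at this
    exact this
  map_smul' β h := by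
    have := hΦ h h β 0
    simp only [zero_mul, add_zero] at this
    exact this

theorem Nat.succ_mul_sum_choose_mul_factorial_mul_factorial (a b : ℕ) :
    (a + 1) * ∑ k ∈ range (b + 1), b.choose k * ((a + k)! * (b - k)!) = (a + b + 1)! := by
  have hterm : ∀ k ∈ range (b + 1),
      b.choose k * ((a + k)! * (b - k)!) = (k + a).choose a * (a ! * b !) := fun k hk => by
    refine Nat.eq_of_mul_eq_mul_right (factorial_pos k) ?_
    calc b.choose k * ((a + k)! * (b - k)!) * k !
        = (b.choose k * k ! * (b - k)!) * (a + k)! := by ring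
      _ = ((k + a).choose a * k ! * a !) * b ! := by
        rw [choose_mul_factorial_mul_factorial (mem_range_succ_iff.1 hk),
          add_choose_mul_factorial_mul_factorial, add_comm a k, mul_comm]
      _ = (k + a).choose a * (a ! * b !) * k ! := by ring
  rw [sum_congr rfl hterm, ← sum_mul, sum_range_add_choose]
  calc (a + 1) * ((b + a + 1).choose (a + 1) * (a ! * b !))
      = (b + (a + 1)).choose (a + 1) * b ! * (a + 1)! := by
        rw [factorial_succ]; ring_nf
    _ = (a + b + 1)! := by
        rw [add_choose_mul_factorial_mul_factorial]; ring_nf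

theorem sum_choose_mul_shapWeight (a b : ℕ) :
    ∑ k ∈ range (b + 1), (b.choose k : ℝ) * shapWeight (a + b + 1) (a + k)
      = (a + 1 : ℝ)⁻¹ := by
  have hterm : ∀ k ∈ range (b + 1), (b.choose k : ℝ) * shapWeight (a + b + 1) (a + k)
      = (b.choose k * ((a + k)! * (b - k)!) : ℕ) / ((a + b + 1)! : ℕ) := fun k hk => by
    have hk : a + b + 1 - (a + k) - 1 = b - k := by
      have := mem_range_succ_iff.1 hk
      omega
    rw [shapWeight, hk]
    push_cast
    ring
  have hprod := Nat.succ_mul_sum_choose_mul_factorial_mul_factorial a b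
  have hsum : (∑ k ∈ range (b + 1), b.choose k * ((a + k)! * (b - k)!) : ℝ) ≠ 0 := by
    exact_mod_cast right_ne_zero_of_mul (hprod ▸ factorial_ne_zero _)
  rw [sum_congr rfl hterm, ← sum_div, ← hprod]
  push_cast
  rw [div_mul_cancel_right₀ hsum]

section Shapley

variable {n m : ℕ}

noncomputable def shapley (v : Finset (Fin n) → ℝ) (i : Fin n) : ℝ :=
  ∑ S ∈ (univ \ {i}).powerset, shapWeight n S.card * (v (insert i S) - v S)

theorem margin_mul (v : Finset (Fin n) → ℝ) (w : Finset (Fin m) → ℝ) (i : Fin n) (j : Fin m)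
    (S : Finset (Fin n)) (F : Finset (Fin m)) :
    margin (fun S F => v S * w F) i j S F = (v (insert i S) - v S) * (w (insert j F) - w F) := by
  simp only [margin]
  ring

theorem psi2d_mul (v : Finset (Fin n) → ℝ) (w : Finset (Fin m) → ℝ) (i : Fin n)
    (j : Fin m) :
    psi2d (fun S F => v S * w F) i j = shapley v i * shapley w j := by
  simp only [psi2d, shapley, margin_mul, sum_mul_sum]
  exact sum_congr rfl fun S _ => sum_congr rfl fun F _ => by ring

theorem psi2d_linear_combination (h₁ h₂ : Finset (Fin n) → Finset (Fin m) → ℝ) (β₁ β₂ : ℝ)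
    (i : Fin n) (j : Fin m) :
    psi2d (fun S F => β₁ * h₁ S F + β₂ * h₂ S F) i j
      = β₁ * psi2d h₁ i j + β₂ * psi2d h₂ i j := by
  simp only [psi2d, mul_sum, ← sum_add_distrib]
  exact sum_congr rfl fun S _ => sum_congr rfl fun F _ => by simp only [margin]; ring

theorem shapley_unanimityGame (T : Finset (Fin n)) (i : Fin n) :
    shapley (unanimityGame T) i = if i ∈ T then (#T : ℝ)⁻¹ else 0 := by
  split_ifs with hi
  swap
  · exact sum_eq_zero fun S _ => by rw [unanimityGame_insert_of_notMem hi, sub_self, mul_zero]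
  have hterm : ∀ S ∈ (univ \ {i}).powerset, shapWeight n S.card
      * (unanimityGame T (insert i S) - unanimityGame T S)
      = if T.erase i ⊆ S then shapWeight n S.card else 0 := fun S hS => by
    have hiS : i ∉ S := fun h => by simpa using mem_powerset.1 hS h
    simp only [unanimityGame, subset_insert_iff, if_neg fun h : T ⊆ S => hiS (h hi)]
    split_ifs <;> ring
  have hsub : T.erase i ⊆ univ \ {i} := fun x hx => by simpa using ne_of_mem_erase hx
  have hcompl : (univ \ {i}) \ T.erase i = univ \ T := by
    ext x
    by_cases hx : x = i <;> simp [hx, hi]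
  obtain ⟨a, ha⟩ : ∃ a, #T = a + 1 := ⟨_, (card_erase_add_one hi).symm⟩
  obtain ⟨b, hb⟩ : ∃ b, #(univ \ T) = b := ⟨_, rfl⟩
  have hn : n = a + b + 1 := by
    have hT := card_le_univ T
    rw [Fintype.card_fin, ha] at hT
    rw [← hb, card_univ_sdiff, Fintype.card_fin, ha]
    omega
  have hunion : ∀ U ∈ (univ \ T).powerset,
      shapWeight n #(T.erase i ∪ U) = shapWeight n (a + #U) := fun U hU => by
    have hdisj : Disjoint (T.erase i) U := disjoint_of_subset_left (erase_subset i T)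
      (disjoint_of_subset_right (mem_powerset.1 hU) disjoint_sdiff)
    rw [card_union_of_disjoint hdisj, card_erase_of_mem hi, ha, Nat.add_sub_cancel]
  unfold shapley
  rw [sum_congr rfl hterm, ← sum_filter, ← Icc_eq_filter_powerset,
    sum_Icc_eq_sum_powerset_sdiff hsub, hcompl, sum_congr rfl hunion,
    sum_powerset_apply_card (fun k => shapWeight n (a + k)), hb, ha, hn]
  simp only [nsmul_eq_mul, sum_choose_mul_shapWeight]
  norm_cast

theorem psi2d_unanimityGame₂ (T : Finset (Fin n)) (G : Finset (Fin m)) (i : Fin n)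
    (j : Fin m) :
    psi2d (unanimityGame₂ T G) i j
      = (if i ∈ T then (#T : ℝ)⁻¹ else 0) * (if j ∈ G then (#G : ℝ)⁻¹ else 0) := by
  rw [← shapley_unanimityGame, ← shapley_unanimityGame]
  exact psi2d_mul _ _ i j

end Shapley

section Axioms

variable {n m : ℕ} {ψ : (Finset (Fin n) → Finset (Fin m) → ℝ) → Fin n → Fin m → ℝ}

theorem apply_unanimityGame₂_eq_zero
    (hdummy : ∀ (h : Finset (Fin n) → Finset (Fin m) → ℝ) (i : Fin n) (j : Fin m) (c : ℝ),
      (∀ (S : Finset (Fin n)) (F : Finset (Fin m)), i ∉ S → j ∉ F →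
        margin h i j S F = c) → ψ h i j = c)
    {T : Finset (Fin n)} {G : Finset (Fin m)} {i : Fin n} {j : Fin m} (hij : i ∉ T ∨ j ∉ G) :
    ψ (unanimityGame₂ T G) i j = 0 := by
  refine hdummy _ i j 0 fun S F _ _ => ?_
  unfold unanimityGame₂
  rw [margin_mul]
  rcases hij with hi | hj
  · rw [unanimityGame_insert_of_notMem hi, sub_self, zero_mul]
  · rw [unanimityGame_insert_of_notMem hj, sub_self, mul_zero]

theorem apply_unanimityGame₂_eq_of_mem
    (hsym : ∀ (h : Finset (Fin n) → Finset (Fin m) → ℝ)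
      (π₁ : Equiv.Perm (Fin n)) (π₂ : Equiv.Perm (Fin m)) (i : Fin n) (j : Fin m),
      ψ (fun S F => h (S.image π₁) (F.image π₂)) (π₁ i) (π₂ j) = ψ h i j)
    {T : Finset (Fin n)} {G : Finset (Fin m)} {i i' : Fin n} {j j' : Fin m}
    (hi : i ∈ T) (hi' : i' ∈ T) (hj : j ∈ G) (hj' : j' ∈ G) :
    ψ (unanimityGame₂ T G) i' j' = ψ (unanimityGame₂ T G) i j := by
  have hgame : (fun S F => unanimityGame₂ T G (S.image (Equiv.swap i i'))
      (F.image (Equiv.swap j j'))) = (unanimityGame₂ T G : _ → _ → ℝ) := by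
    funext S F
    simp only [unanimityGame₂, unanimityGame_image_of_image_eq (image_swap_of_mem hi hi'),
      unanimityGame_image_of_image_eq (image_swap_of_mem hj hj')]
  have := hsym (unanimityGame₂ T G) (Equiv.swap i i') (Equiv.swap j j') i j
  rwa [hgame, Equiv.swap_apply_left, Equiv.swap_apply_left] at this

theorem apply_unanimityGame₂
    (hdummy : ∀ (h : Finset (Fin n) → Finset (Fin m) → ℝ) (i : Fin n) (j : Fin m) (c : ℝ),
      (∀ (S : Finset (Fin n)) (F : Finset (Fin m)), i ∉ S → j ∉ F →
        margin h i j S F = c) → ψ h i j = c)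
    (hsym : ∀ (h : Finset (Fin n) → Finset (Fin m) → ℝ)
      (π₁ : Equiv.Perm (Fin n)) (π₂ : Equiv.Perm (Fin m)) (i : Fin n) (j : Fin m),
      ψ (fun S F => h (S.image π₁) (F.image π₂)) (π₁ i) (π₂ j) = ψ h i j)
    (heff : ∀ h : Finset (Fin n) → Finset (Fin m) → ℝ,
      ∑ i : Fin n, ∑ j : Fin m, ψ h i j = h univ univ)
    (T : Finset (Fin n)) (G : Finset (Fin m)) (i : Fin n) (j : Fin m) :
    ψ (unanimityGame₂ T G) i j
      = (if i ∈ T then (#T : ℝ)⁻¹ else 0) * (if j ∈ G then (#G : ℝ)⁻¹ else 0) := by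
  by_cases hij : i ∈ T ∧ j ∈ G
  swap
  · rw [apply_unanimityGame₂_eq_zero hdummy (not_and_or.1 hij)]
    rcases not_and_or.1 hij with hi | hj <;> simp [*]
  obtain ⟨hi, hj⟩ := hij
  have hpoint : ∀ i' j', ψ (unanimityGame₂ T G) i' j'
      = (if i' ∈ T then 1 else 0) * (if j' ∈ G then 1 else 0)
        * ψ (unanimityGame₂ T G) i j := by
    intro i' j'
    by_cases hij' : i' ∈ T ∧ j' ∈ G
    · rw [if_pos hij'.1, if_pos hij'.2, one_mul, one_mul,
        apply_unanimityGame₂_eq_of_mem hsym hi hij'.1 hj hij'.2]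
    · rw [apply_unanimityGame₂_eq_zero hdummy (not_and_or.1 hij')]
      rcases not_and_or.1 hij' with hi' | hj' <;> simp [*]
  have htotal := heff (unanimityGame₂ T G)
  generalize ψ (unanimityGame₂ T G) i j = c at hpoint ⊢
  simp only [hpoint, ← sum_mul, ← sum_mul_sum, sum_boole, filter_mem_eq_inter, univ_inter,
    unanimityGame₂, unanimityGame, subset_univ, if_true, mul_one] at htotal
  rw [if_pos hi, if_pos hj, ← mul_inv]
  exact eq_inv_of_mul_eq_one_right htotal

end Axioms

theorem psi2d_unique_general {n m : ℕ}
    (ψ : (Finset (Fin n) → Finset (Fin m) → ℝ) → Fin n → Fin m → ℝ)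
    (hlin : ∀ (h₁ h₂ : Finset (Fin n) → Finset (Fin m) → ℝ) (β₁ β₂ : ℝ)
      (i : Fin n) (j : Fin m),
      ψ (fun S F => β₁ * h₁ S F + β₂ * h₂ S F) i j = β₁ * ψ h₁ i j + β₂ * ψ h₂ i j)
    (hdummy : ∀ (h : Finset (Fin n) → Finset (Fin m) → ℝ) (i : Fin n) (j : Fin m) (c : ℝ),
      (∀ (S : Finset (Fin n)) (F : Finset (Fin m)), i ∉ S → j ∉ F →
        margin h i j S F = c) → ψ h i j = c)
    (hsym : ∀ (h : Finset (Fin n) → Finset (Fin m) → ℝ)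
      (π₁ : Equiv.Perm (Fin n)) (π₂ : Equiv.Perm (Fin m)) (i : Fin n) (j : Fin m),
      ψ (fun S F => h (S.image π₁) (F.image π₂)) (π₁ i) (π₂ j) = ψ h i j)
    (heff : ∀ h : Finset (Fin n) → Finset (Fin m) → ℝ,
      ∑ i : Fin n, ∑ j : Fin m, ψ h i j = h univ univ) :
    ∀ (h : Finset (Fin n) → Finset (Fin m) → ℝ) (i : Fin n) (j : Fin m),
      ψ h i j = psi2d h i j := by
  intro h i j
  have hL : LinearMap.ofLinearCombination (ψ · i j) (hlin · · · · i j)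
      = LinearMap.ofLinearCombination (psi2d · i j) (psi2d_linear_combination · · · · i j) :=
    LinearMap.ext_unanimityGame₂ fun T G =>
      (apply_unanimityGame₂ hdummy hsym heff T G i j).trans (psi2d_unanimityGame₂ T G i j).symm
  exact LinearMap.congr_fun hL h

/-- Representation theorem (uniqueness): any value `ψ` satisfying 2D-linearity, 2D-dummy,
2D-symmetry and 2D-efficiency coincides with the 2D-Shapley value. -/
theorem psi2d_unique {n m : ℕ} (hn : 1 ≤ n) (hm : 1 ≤ m)
    (ψ : (Finset (Fin n) → Finset (Fin m) → ℝ) → Fin n → Fin m → ℝ)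
    (hlin : ∀ (h₁ h₂ : Finset (Fin n) → Finset (Fin m) → ℝ) (β₁ β₂ : ℝ)
      (i : Fin n) (j : Fin m),
      ψ (fun S F => β₁ * h₁ S F + β₂ * h₂ S F) i j = β₁ * ψ h₁ i j + β₂ * ψ h₂ i j)
    (hdummy : ∀ (h : Finset (Fin n) → Finset (Fin m) → ℝ) (i : Fin n) (j : Fin m) (c : ℝ),
      (∀ (S : Finset (Fin n)) (F : Finset (Fin m)), i ∉ S → j ∉ F →
        margin h i j S F = c) → ψ h i j = c)
    (hsym : ∀ (h : Finset (Fin n) → Finset (Fin m) → ℝ)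
      (π₁ : Equiv.Perm (Fin n)) (π₂ : Equiv.Perm (Fin m)) (i : Fin n) (j : Fin m),
      ψ (fun S F => h (S.image π₁) (F.image π₂)) (π₁ i) (π₂ j) = ψ h i j)
    (heff : ∀ h : Finset (Fin n) → Finset (Fin m) → ℝ,
      ∑ i : Fin n, ∑ j : Fin m, ψ h i j = h univ univ) :
    ∀ (h : Finset (Fin n) → Finset (Fin m) → ℝ) (i : Fin n) (j : Fin m),
      ψ h i j = psi2d h i j :=
  psi2d_unique_general ψ hlin hdummy hsym heff
end

section
/- (Proposition: 2D-symmetry implies interchangeability.) Let n, m ≥ 1, N = {1,…,n}, M = {1,…,m}, and let ψ assign to every utility function h : 2^N × 2^M → ℝ a real matrix (ψ_{ij}(h))_{i∈N, j∈M}. Suppose ψ satisfies 2D-linearity, 2D-dummy, 2D-efficiency, and 2D-symmetry (ψ_{π₁(i),π₂(j)}((π₁π₂)h) = ψ_{ij}(h) for all permutations π₁ of N, π₂ of M, where [(π₁π₂)h](S,F) := h(π₁(S), π₂(F))). Then for all i₁, i₂ ∈ N and j₁, j₂ ∈ M: if h(S∪{i₁}, F) = h(S∪{i₂}, F) for all S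 ⊆ N∖{i₁,i₂} and all F ⊆ M, and h(S, F∪{j₁}) = h(S, F∪{j₂}) for all S ⊆ N and all F ⊆ M∖{j₁,j₂}, then ψ_{i₁j₁}(h) = ψ_{i₂j₂}(h). -/
open Finset Nat

lemma image_swap_eq_self {α : Type*} [DecidableEq α] {a b : α} {S : Finset α}
    (hiff : a ∈ S ↔ b ∈ S) : S.image (Equiv.swap a b) = S := by
  ext x
  simp only [mem_image]
  constructor
  · rintro ⟨y, hy, rfl⟩
    by_cases h1 : y = a
    · subst h1; simpa using hiff.mp hy
    · by_cases h2 : y = b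
      · subst h2; simpa using hiff.mpr hy
      · simpa [Equiv.swap_apply_of_ne_of_ne h1 h2] using hy
  · intro hx
    by_cases h1 : x = a
    · exact ⟨b, hiff.mp (h1 ▸ hx), by simp [h1]⟩
    · by_cases h2 : x = b
      · exact ⟨a, hiff.mpr (h2 ▸ hx), by simp [h2]⟩
      · exact ⟨x, hx, Equiv.swap_apply_of_ne_of_ne h1 h2⟩

lemma image_swap_mem_not {α : Type*} [DecidableEq α] {a b : α} {S : Finset α}
    (ha : a ∈ S) (hb : b ∉ S) : S.image (Equiv.swap a b) = insert b (S.erase a) := by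
  ext x
  simp only [mem_image, mem_insert, mem_erase]
  constructor
  · rintro ⟨y, hy, rfl⟩
    by_cases e1 : y = a
    · left; simp [e1]
    · have e2 : y ≠ b := fun h => hb (h ▸ hy)
      right
      rw [Equiv.swap_apply_of_ne_of_ne e1 e2]
      exact ⟨e1, hy⟩
  · rintro (rfl | ⟨hx, hxS⟩)
    · exact ⟨a, ha, by simp⟩
    · have e2 : x ≠ b := fun h => hb (h ▸ hxS)
      exact ⟨x, hxS, Equiv.swap_apply_of_ne_of_ne hx e2⟩

lemma swap_key {α : Type*} [DecidableEq α] (g : Finset α → ℝ) (a b : α)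
    (hg : ∀ S, a ∉ S → b ∉ S → g (insert a S) = g (insert b S)) :
    ∀ S : Finset α, g (S.image (Equiv.swap a b)) = g S := by
  intro S
  by_cases ha : a ∈ S <;> by_cases hb : b ∈ S
  · rw [image_swap_eq_self (by simp [ha, hb])]
  · rw [image_swap_mem_not ha hb,
      ← hg _ (notMem_erase a S) (fun h => hb (mem_of_mem_erase h)),
      insert_erase ha]
  · rw [Equiv.swap_comm, image_swap_mem_not hb ha,
      hg _ (fun h => ha (mem_of_mem_erase h)) (notMem_erase b S),
      insert_erase hb]
  · rw [image_swap_eq_self (by simp [ha, hb])]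

/-- 2D-symmetry (together with 2D-linearity, 2D-dummy and 2D-efficiency)
implies the interchangeability property. -/
theorem symmetry_implies_interchangeable {n m : ℕ} (hn : 1 ≤ n) (hm : 1 ≤ m)
    (ψ : (Finset (Fin n) → Finset (Fin m) → ℝ) → Fin n → Fin m → ℝ)
    (hlin : ∀ (h₁ h₂ : Finset (Fin n) → Finset (Fin m) → ℝ) (β₁ β₂ : ℝ)
      (i : Fin n) (j : Fin m),
      ψ (fun S F => β₁ * h₁ S F + β₂ * h₂ S F) i j = β₁ * ψ h₁ i j + β₂ * ψ h₂ i j)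
    (hdummy : ∀ (h : Finset (Fin n) → Finset (Fin m) → ℝ) (i : Fin n) (j : Fin m) (c : ℝ),
      (∀ (S : Finset (Fin n)) (F : Finset (Fin m)), i ∉ S → j ∉ F →
        margin h i j S F = c) → ψ h i j = c)
    (heff : ∀ h : Finset (Fin n) → Finset (Fin m) → ℝ,
      ∑ i : Fin n, ∑ j : Fin m, ψ h i j = h univ univ)
    (hsym : ∀ (h : Finset (Fin n) → Finset (Fin m) → ℝ)
      (π₁ : Equiv.Perm (Fin n)) (π₂ : Equiv.Perm (Fin m)) (i : Fin n) (j : Fin m),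
      ψ (fun S F => h (S.image π₁) (F.image π₂)) (π₁ i) (π₂ j) = ψ h i j) :
    ∀ (h : Finset (Fin n) → Finset (Fin m) → ℝ)
      (i₁ i₂ : Fin n) (j₁ j₂ : Fin m),
      (∀ (S : Finset (Fin n)) (F : Finset (Fin m)), i₁ ∉ S → i₂ ∉ S →
        h (insert i₁ S) F = h (insert i₂ S) F) →
      (∀ (S : Finset (Fin n)) (F : Finset (Fin m)), j₁ ∉ F → j₂ ∉ F →
        h S (insert j₁ F) = h S (insert j₂ F)) →
      ψ h i₁ j₁ = ψ h i₂ j₂ := by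
  intro h i₁ i₂ j₁ j₂ H1 H2
  have key := hsym h (Equiv.swap i₁ i₂) (Equiv.swap j₁ j₂) i₁ j₁
  rw [Equiv.swap_apply_left, Equiv.swap_apply_left] at key
  have hfun : (fun S F => h (S.image (Equiv.swap i₁ i₂)) (F.image (Equiv.swap j₁ j₂)))
      = h := by
    funext S F
    rw [swap_key (fun F' => h (S.image (Equiv.swap i₁ i₂)) F') j₁ j₂
        (fun F' h1 h2 => H2 _ _ h1 h2) F,
      swap_key (fun S' => h S' F) i₁ i₂ (fun S' h1 h2 => H1 _ _ h1 h2) S]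
  rw [hfun] at key
  exact key.symm
end

section
/- (Lemma: weighted-marginal representation from linearity and dummy.) Let n, m ≥ 1, N = {1,…,n}, M = {1,…,m}, and let ψ assign to every utility function h : 2^N × 2^M → ℝ a real matrix (ψ_{ij}(h))_{i∈N, j∈M}. Suppose ψ satisfies 2D-linearity and 2D-dummy. Then for every (i,j) ∈ N × M there exist real weights p^{ij}_{S,F}, indexed by S ⊆ N∖{i} and F ⊆ M∖{j}, such that for every utility function h, ψ_{ij}(h) = Σ_{S ⊆ N∖{i}} Σ_{F ⊆ M∖{j}} p^{ij}_{S,F} · M_h^{i,j}(S,F), and moreover Σ_{S ⊆ N∖{i}} Σ_{F ⊆ M∖{j}} p^{ij}_{S,F} = 1. -/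
open Finset Nat

section Aux
variable {n m : ℕ}

/-- Basis game: indicator of the pair `(insert i S, insert j F)`. -/
noncomputable def gBase (i : Fin n) (j : Fin m) (S : Finset (Fin n)) (F : Finset (Fin m)) :
    Finset (Fin n) → Finset (Fin m) → ℝ :=
  fun T G => if T = insert i S ∧ G = insert j F then 1 else 0

lemma margin_sum {ι : Type*} (s : Finset ι) (f : ι → Finset (Fin n) → Finset (Fin m) → ℝ)
    (i : Fin n) (j : Fin m) (S : Finset (Fin n)) (F : Finset (Fin m)) :
    margin (fun T G => ∑ x ∈ s, f x T G) i j S F = ∑ x ∈ s, margin (f x) i j S F := by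
  simp [margin, Finset.sum_add_distrib, Finset.sum_sub_distrib]

lemma margin_smul (a : ℝ) (f : Finset (Fin n) → Finset (Fin m) → ℝ)
    (i : Fin n) (j : Fin m) (S : Finset (Fin n)) (F : Finset (Fin m)) :
    margin (fun T G => a * f T G) i j S F = a * margin f i j S F := by
  simp [margin]; ring

lemma margin_sub (f g : Finset (Fin n) → Finset (Fin m) → ℝ)
    (i : Fin n) (j : Fin m) (S : Finset (Fin n)) (F : Finset (Fin m)) :
    margin (fun T G => f T G - g T G) i j S F = margin f i j S F - margin g i j S F := by
  simp [margin]; ring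

lemma insert_eq_insert_iff {α : Type*} [DecidableEq α] (a : α) {s t : Finset α}
    (hs : a ∉ s) (ht : a ∉ t) : insert a s = insert a t ↔ s = t := by
  constructor
  · intro h
    rw [← Finset.erase_insert hs, h, Finset.erase_insert ht]
  · intro h; rw [h]

lemma margin_gBase (i : Fin n) (j : Fin m) {S T : Finset (Fin n)} {F G : Finset (Fin m)}
    (hS : i ∉ S) (hF : j ∉ F) (hT : i ∉ T) (hG : j ∉ G) :
    margin (gBase i j S F) i j T G = if S = T ∧ F = G then 1 else 0 := by
  have hiff : (insert i T = insert i S ∧ insert j G = insert j F) ↔ (S = T ∧ F = G) := by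
    rw [insert_eq_insert_iff i hT hS, insert_eq_insert_iff j hG hF]
    exact and_congr eq_comm eq_comm
  have e1 : gBase i j S F (insert i T) (insert j G) = if S = T ∧ F = G then 1 else 0 :=
    if_congr hiff rfl rfl
  have e2 : gBase i j S F T G = 0 := by
    simp only [gBase]; rw [if_neg]; rintro ⟨h1, -⟩
    exact hT (h1 ▸ Finset.mem_insert_self i S)
  have e3 : gBase i j S F (insert i T) G = 0 := by
    simp only [gBase]; rw [if_neg]; rintro ⟨-, h2⟩
    exact hG (h2 ▸ Finset.mem_insert_self j F)
  have e4 : gBase i j S F T (insert j G) = 0 := by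
    simp only [gBase]; rw [if_neg]; rintro ⟨h1, -⟩
    exact hT (h1 ▸ Finset.mem_insert_self i S)
  simp only [margin, e1, e2, e3, e4]; ring

lemma collapse (i : Fin n) (j : Fin m) (v : Finset (Fin n) → Finset (Fin m) → ℝ)
    {T : Finset (Fin n)} {G : Finset (Fin m)} (hT : i ∉ T) (hG : j ∉ G) :
    ∑ x ∈ (univ \ {i}).powerset ×ˢ (univ \ {j}).powerset,
      v x.1 x.2 * (if x.1 = T ∧ x.2 = G then (1:ℝ) else 0) = v T G := by
  have hmem : ((T, G) : Finset (Fin n) × Finset (Fin m)) ∈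
      (univ \ {i}).powerset ×ˢ (univ \ {j}).powerset := by
    simp [Finset.mem_product, Finset.subset_sdiff, hT, hG]
  rw [Finset.sum_eq_single (T, G)]
  · simp
  · intro x _ hx
    have : ¬ (x.1 = T ∧ x.2 = G) := by
      intro hc; exact hx (Prod.ext hc.1 hc.2)
    simp [this]
  · intro h; exact absurd hmem h

lemma margin_double (i : Fin n) (j : Fin m) (c : Finset (Fin n) → Finset (Fin m) → ℝ)
    {T : Finset (Fin n)} {G : Finset (Fin m)} (hT : i ∉ T) (hG : j ∉ G) :
    margin (fun T' G' => ∑ x ∈ (univ \ {i}).powerset ×ˢ (univ \ {j}).powerset,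
      c x.1 x.2 * gBase i j x.1 x.2 T' G') i j T G = c T G := by
  rw [margin_sum]
  rw [show (∑ x ∈ (univ \ {i}).powerset ×ˢ (univ \ {j}).powerset,
      margin (fun T' G' => c x.1 x.2 * gBase i j x.1 x.2 T' G') i j T G)
      = ∑ x ∈ (univ \ {i}).powerset ×ˢ (univ \ {j}).powerset,
      c x.1 x.2 * (if x.1 = T ∧ x.2 = G then (1:ℝ) else 0) from
    Finset.sum_congr rfl (fun x hx => by
      have h1 : i ∉ x.1 := by
        have := (Finset.mem_product.mp hx).1
        simp only [Finset.mem_powerset, Finset.subset_sdiff,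
          Finset.disjoint_singleton_right] at this
        exact this.2
      have h2 : j ∉ x.2 := by
        have := (Finset.mem_product.mp hx).2
        simp only [Finset.mem_powerset, Finset.subset_sdiff,
          Finset.disjoint_singleton_right] at this
        exact this.2
      rw [margin_smul, margin_gBase i j h1 h2 hT hG])]
  exact collapse i j c hT hG

end Aux

lemma psi_sum {n m : ℕ} (ψ : (Finset (Fin n) → Finset (Fin m) → ℝ) → Fin n → Fin m → ℝ)
    (hlin : ∀ (h₁ h₂ : Finset (Fin n) → Finset (Fin m) → ℝ) (β₁ β₂ : ℝ)
      (i : Fin n) (j : Fin m),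
      ψ (fun S F => β₁ * h₁ S F + β₂ * h₂ S F) i j = β₁ * ψ h₁ i j + β₂ * ψ h₂ i j)
    (i : Fin n) (j : Fin m) (hzero : ψ (fun _ _ => (0:ℝ)) i j = 0)
    {ι : Type*} [DecidableEq ι] (s : Finset ι) (c : ι → ℝ)
    (g : ι → Finset (Fin n) → Finset (Fin m) → ℝ) :
    ψ (fun T G => ∑ x ∈ s, c x * g x T G) i j = ∑ x ∈ s, c x * ψ (g x) i j := by
  induction s using Finset.induction_on with
  | empty => simpa using hzero
  | @insert a s ha ih =>
    have h1 : (fun T G => ∑ x ∈ insert a s, c x * g x T G)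
        = fun T G => c a * g a T G + 1 * ∑ x ∈ s, c x * g x T G := by
      funext T G; rw [Finset.sum_insert ha]; ring
    rw [h1, hlin, ih, Finset.sum_insert ha]; ring


/-- Lemma (weighted-marginal representation): 2D-linearity and 2D-dummy imply that
`ψ_{ij}(h)` is a weighted sum of marginal contributions, with weights summing to 1. -/
theorem linearity_dummy_weighted_marginal {n m : ℕ} (hn : 1 ≤ n) (hm : 1 ≤ m)
    (ψ : (Finset (Fin n) → Finset (Fin m) → ℝ) → Fin n → Fin m → ℝ)
    (hlin : ∀ (h₁ h₂ : Finset (Fin n) → Finset (Fin m) → ℝ) (β₁ β₂ : ℝ)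
      (i : Fin n) (j : Fin m),
      ψ (fun S F => β₁ * h₁ S F + β₂ * h₂ S F) i j = β₁ * ψ h₁ i j + β₂ * ψ h₂ i j)
    (hdummy : ∀ (h : Finset (Fin n) → Finset (Fin m) → ℝ) (i : Fin n) (j : Fin m) (c : ℝ),
      (∀ (S : Finset (Fin n)) (F : Finset (Fin m)), i ∉ S → j ∉ F →
        margin h i j S F = c) → ψ h i j = c) :
    ∀ (i : Fin n) (j : Fin m),
      ∃ p : Finset (Fin n) → Finset (Fin m) → ℝ,
        (∀ h : Finset (Fin n) → Finset (Fin m) → ℝ,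
          ψ h i j = ∑ S ∈ (univ \ {i}).powerset, ∑ F ∈ (univ \ {j}).powerset,
            p S F * margin h i j S F) ∧
        ∑ S ∈ (univ \ {i}).powerset, ∑ F ∈ (univ \ {j}).powerset, p S F = 1 := by
  intro i j
  have hzero : ψ (fun _ _ => (0:ℝ)) i j = 0 :=
    hdummy _ i j 0 (fun S F _ _ => by simp [margin])
  have hmemTG : ∀ (T : Finset (Fin n)) (G : Finset (Fin m)), i ∉ T → j ∉ G →
      T ∈ (univ \ {i}).powerset ∧ G ∈ (univ \ {j}).powerset := by
    intro T G hT hG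
    constructor <;> simp [Finset.subset_sdiff, hT, hG]
  refine ⟨fun S F => ψ (gBase i j S F) i j, ?_, ?_⟩
  · intro h
    set P := (univ \ {i}).powerset ×ˢ (univ \ {j}).powerset with hP
    set hsum : Finset (Fin n) → Finset (Fin m) → ℝ :=
      fun T G => ∑ x ∈ P, margin h i j x.1 x.2 * gBase i j x.1 x.2 T G with hhsum
    set r : Finset (Fin n) → Finset (Fin m) → ℝ := fun T G => h T G - hsum T G with hr
    have hdec : h = fun T G => 1 * hsum T G + 1 * r T G := by
      funext T G; simp [hr]
    have h1 : ψ h i j = 1 * ψ hsum i j + 1 * ψ r i j := by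
      conv_lhs => rw [hdec]
      exact hlin hsum r 1 1 i j
    have hrzero : ψ r i j = 0 := by
      apply hdummy r i j 0
      intro T G hT hG
      have : margin hsum i j T G = margin h i j T G :=
        margin_double i j (fun S F => margin h i j S F) hT hG
      rw [hr]
      rw [margin_sub h hsum i j T G, this]
      ring
    have h2 : ψ hsum i j = ∑ x ∈ P, margin h i j x.1 x.2 * ψ (gBase i j x.1 x.2) i j :=
      psi_sum ψ hlin i j hzero P _ _
    rw [h1, hrzero, h2, hP, Finset.sum_product]
    simp [mul_comm]
  · have hone : ψ (fun T G => ∑ x ∈ (univ \ {i}).powerset ×ˢ (univ \ {j}).powerset,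
        (1:ℝ) * gBase i j x.1 x.2 T G) i j = 1 := by
      apply hdummy _ i j 1
      intro T G hT hG
      have := margin_double i j (fun _ _ => (1:ℝ)) hT hG
      simpa using this
    have h2 := psi_sum ψ hlin i j hzero
      ((univ \ {i}).powerset ×ˢ (univ \ {j}).powerset) (fun _ => (1:ℝ))
      (fun x => gBase i j x.1 x.2)
    rw [hone] at h2
    rw [← Finset.sum_product']
    simpa using h2.symm
end

section
/- (Lemma: symmetry forces cardinality-dependent weights.) Let n, m ≥ 1, N = {1,…,n}, M = {1,…,m}, and suppose ψ satisfies 2D-linearity, 2D-dummy, and 2D-symmetry. For A ⊆ N, B ⊆ M, let W_{A,B} be the utility function with W_{A,B}(W₁,W₂) = 1 if W₁ = A and W₂ = B, and 0 otherwise. Then for all i₁, i₂ ∈ N, j₁, j₂ ∈ M, all S₁ ⊆ N∖{i₁}, S₂ ⊆ N∖{i₂} with |S₁| = |S₂|, and all F₁ ⊆ M∖{j₁}, F₂ ⊆ M∖{j₂} with |F₁| = |F₂|: ψ_{i₁j₁}(W_{S₁∪{i₁}, F₁∪{j₁}}) = ψ_{i₂j₂}(W_{S₂∪{i₂}, F₂∪{j₂}}).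 Equivalently, the weights p^{ij}_{S,F} := ψ_{ij}(W_{S∪{i}, F∪{j}}) depend only on the cardinalities |S| and |F|. -/
open Finset Nat

/-- The Dirac game `W_{A,B}`: utility 1 exactly on the pair `(A,B)` and 0 elsewhere. -/
noncomputable def dirac {n m : ℕ} (A : Finset (Fin n)) (B : Finset (Fin m)) :
    Finset (Fin n) → Finset (Fin m) → ℝ :=
  fun W₁ W₂ => if W₁ = A ∧ W₂ = B then 1 else 0

theorem Finset.image_swap_of_mem_iff {β : Type*} [DecidableEq β] {s : Finset β} {x y : β}
    (hxy : x ∈ s ↔ y ∈ s) : s.image (Equiv.swap x y) = s := by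
  refine eq_of_subset_of_card_le (image_subset_iff.2 fun z hz => ?_)
    (card_image_of_injective _ (Equiv.swap x y).injective).ge
  rw [Equiv.swap_apply_def]
  split_ifs with hzx hzy
  · exact hxy.1 (hzx ▸ hz)
  · exact hxy.2 (hzy ▸ hz)
  · exact hz

theorem Equiv.Perm.exists_image_eq_and_apply_eq {β : Type*} [DecidableEq β]
    {s t : Finset β} {a b : β} (h : #s = #t) (hab : a ∈ s ↔ b ∈ t) :
    ∃ σ : Perm β, s.image σ = t ∧ σ a = b := by
  obtain ⟨σ, hσ⟩ := exists_map_finset_eq s t h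
  have hσs : s.image σ = t := by rw [← hσ, map_eq_image]; rfl
  have hσa : σ a ∈ t ↔ b ∈ t := by rw [← hσs, σ.injective.mem_finset_image, hσs, hab]
  refine ⟨σ.trans (swap (σ a) b), ?_, by simp⟩
  rw [coe_trans, ← image_image, hσs, image_swap_of_mem_iff hσa]

theorem Finset.exists_mem_and_mem_iff_of_card_eq {β : Type*} [DecidableEq β]
    {s t : Finset β} {b : β} (h : #s = #t) (hb : b ∈ t) : ∃ a ∈ s, (b ∈ s ↔ a ∈ t) := by
  by_cases hbs : b ∈ s
  · exact ⟨b, hbs, iff_of_true hbs hb⟩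
  · have hst : ¬s ⊆ t := fun hst => hbs (eq_of_subset_of_card_le hst h.ge ▸ hb)
    obtain ⟨a, has, hat⟩ := not_subset.1 hst
    exact ⟨a, has, iff_of_false hbs hat⟩

theorem dirac_image_image {n m : ℕ} (π₁ : Equiv.Perm (Fin n)) (π₂ : Equiv.Perm (Fin m))
    (A : Finset (Fin n)) (B : Finset (Fin m)) :
    (fun S F => dirac (A.image π₁) (B.image π₂) (S.image π₁) (F.image π₂)) = dirac A B := by
  funext S F
  simp only [dirac, (image_injective π₁.injective).eq_iff, (image_injective π₂.injective).eq_iff]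

def IsSymmetric2D {n m : ℕ} (ψ : (Finset (Fin n) → Finset (Fin m) → ℝ) → Fin n → Fin m → ℝ) :
    Prop :=
  ∀ (h : Finset (Fin n) → Finset (Fin m) → ℝ)
    (π₁ : Equiv.Perm (Fin n)) (π₂ : Equiv.Perm (Fin m)) (i : Fin n) (j : Fin m),
    ψ (fun S F => h (S.image π₁) (F.image π₂)) (π₁ i) (π₂ j) = ψ h i j

namespace IsSymmetric2D

variable {n m : ℕ} {ψ : (Finset (Fin n) → Finset (Fin m) → ℝ) → Fin n → Fin m → ℝ}
  {A A' : Finset (Fin n)} {B B' : Finset (Fin m)} {i i' : Fin n} {j j' : Fin m}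

/-- The axiom moves the player by `π` but the coalitions by `π⁻¹`, so it does not preserve
membership of the player in the coalition: the conditions `i' ∈ A ↔ i ∈ A'` pair the player of
each side with the coalition of the other. -/
theorem apply_dirac_eq_of_mem_iff (hψ : IsSymmetric2D ψ) (hA : #A = #A') (hB : #B = #B')
    (hi : i' ∈ A ↔ i ∈ A') (hj : j' ∈ B ↔ j ∈ B') :
    ψ (dirac A B) i j = ψ (dirac A' B') i' j' := by
  obtain ⟨π₁, rfl, rfl⟩ := Equiv.Perm.exists_image_eq_and_apply_eq hA hi
  obtain ⟨π₂, rfl, rfl⟩ := Equiv.Perm.exists_image_eq_and_apply_eq hB hj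
  rw [← hψ _ π₁ π₂ i' j', dirac_image_image]

theorem apply_dirac_eq_of_mem (hψ : IsSymmetric2D ψ) (hA : #A = #A') (hB : #B = #B')
    (hi : i ∈ A) (hi' : i' ∈ A') (hj : j ∈ B) (hj' : j' ∈ B') :
    ψ (dirac A B) i j = ψ (dirac A' B') i' j' := by
  obtain ⟨i₀, hi₀, hi₀'⟩ := exists_mem_and_mem_iff_of_card_eq hA hi'
  obtain ⟨j₀, hj₀, hj₀'⟩ := exists_mem_and_mem_iff_of_card_eq hB hj'
  calc ψ (dirac A B) i j
      = ψ (dirac A B) i₀ j₀ :=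
        hψ.apply_dirac_eq_of_mem_iff rfl rfl (iff_of_true hi₀ hi) (iff_of_true hj₀ hj)
    _ = ψ (dirac A' B') i' j' := hψ.apply_dirac_eq_of_mem_iff hA hB hi₀' hj₀'

end IsSymmetric2D

theorem symmetry_weights_cardinality_general {n m : ℕ}
    (ψ : (Finset (Fin n) → Finset (Fin m) → ℝ) → Fin n → Fin m → ℝ)
    (hsym : ∀ (h : Finset (Fin n) → Finset (Fin m) → ℝ)
      (π₁ : Equiv.Perm (Fin n)) (π₂ : Equiv.Perm (Fin m)) (i : Fin n) (j : Fin m),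
      ψ (fun S F => h (S.image π₁) (F.image π₂)) (π₁ i) (π₂ j) = ψ h i j) :
    ∀ (i₁ i₂ : Fin n) (j₁ j₂ : Fin m)
      (S₁ S₂ : Finset (Fin n)) (F₁ F₂ : Finset (Fin m)),
      i₁ ∉ S₁ → i₂ ∉ S₂ → j₁ ∉ F₁ → j₂ ∉ F₂ →
      S₁.card = S₂.card → F₁.card = F₂.card →
      ψ (dirac (insert i₁ S₁) (insert j₁ F₁)) i₁ j₁ =
        ψ (dirac (insert i₂ S₂) (insert j₂ F₂)) i₂ j₂ := by
  intro i₁ i₂ j₁ j₂ S₁ S₂ F₁ F₂ hi₁ hi₂ hj₁ hj₂ hS hF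
  refine IsSymmetric2D.apply_dirac_eq_of_mem hsym ?_ ?_ (mem_insert_self _ _)
    (mem_insert_self _ _) (mem_insert_self _ _) (mem_insert_self _ _)
  · rw [card_insert_of_notMem hi₁, card_insert_of_notMem hi₂, hS]
  · rw [card_insert_of_notMem hj₁, card_insert_of_notMem hj₂, hF]

/-- Lemma: under 2D-linearity, 2D-dummy and 2D-symmetry, the weights
`p^{ij}_{S,F} = ψ_{ij}(W_{S∪{i},F∪{j}})` depend only on the cardinalities `|S|` and `|F|`. -/
theorem symmetry_weights_cardinality {n m : ℕ} (hn : 1 ≤ n) (hm : 1 ≤ m)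
    (ψ : (Finset (Fin n) → Finset (Fin m) → ℝ) → Fin n → Fin m → ℝ)
    (hlin : ∀ (h₁ h₂ : Finset (Fin n) → Finset (Fin m) → ℝ) (β₁ β₂ : ℝ)
      (i : Fin n) (j : Fin m),
      ψ (fun S F => β₁ * h₁ S F + β₂ * h₂ S F) i j = β₁ * ψ h₁ i j + β₂ * ψ h₂ i j)
    (hdummy : ∀ (h : Finset (Fin n) → Finset (Fin m) → ℝ) (i : Fin n) (j : Fin m) (c : ℝ),
      (∀ (S : Finset (Fin n)) (F : Finset (Fin m)), i ∉ S → j ∉ F →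
        margin h i j S F = c) → ψ h i j = c)
    (hsym : ∀ (h : Finset (Fin n) → Finset (Fin m) → ℝ)
      (π₁ : Equiv.Perm (Fin n)) (π₂ : Equiv.Perm (Fin m)) (i : Fin n) (j : Fin m),
      ψ (fun S F => h (S.image π₁) (F.image π₂)) (π₁ i) (π₂ j) = ψ h i j) :
    ∀ (i₁ i₂ : Fin n) (j₁ j₂ : Fin m)
      (S₁ S₂ : Finset (Fin n)) (F₁ F₂ : Finset (Fin m)),
      i₁ ∉ S₁ → i₂ ∉ S₂ → j₁ ∉ F₁ → j₂ ∉ F₂ →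
      S₁.card = S₂.card → F₁.card = F₂.card →
      ψ (dirac (insert i₁ S₁) (insert j₁ F₁)) i₁ j₁ =
        ψ (dirac (insert i₂ S₂) (insert j₂ F₂)) i₂ j₂ :=
  symmetry_weights_cardinality_general ψ hsym
end

section
/- (Lemma: efficiency characterization of weighted-marginal values.) Let n, m ≥ 1, N = {1,…,n}, M = {1,…,m}, and suppose ψ is given by ψ_{ij}(h) = Σ_{S ⊆ N∖{i}} Σ_{F ⊆ M∖{j}} p^{ij}_{S,F} · M_h^{i,j}(S,F) for some fixed real weights p^{ij}_{S,F}. Then ψ satisfies 2D-efficiency (Σ_{i∈N} Σ_{j∈M} ψ_{ij}(h) = h(N,M) for every utility function h) if and only if: (a) Σ_{i∈N} Σ_{j∈M} p^{ij}_{N∖{i}, M∖{j}} = 1, and (b) for every pair (S,F) with S ⊆ N, F ⊆ M, and (S,F) ≠ (N,M): Σ_{i∈S} Σ_{j∈F} p^{ij}_{S∖{i}, F∖{j}} + Σ_{i∉S} Σ_{j∉F} p^{ij}_{S,F} − Σ_{i∉S} Σ_{j∈F} p^{ij}_{S, F∖{j}} − Σ_{i∈S} Σ_{j∉F} p^{ij}_{S∖{i},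 F} = 0. -/
open Finset Nat

section Aux

variable {n m : ℕ}

private lemma lemA (f : Fin n → Finset (Fin n) → ℝ) :
    ∑ i : Fin n, ∑ S ∈ ((univ : Finset (Fin n)) \ {i}).powerset, f i S
      = ∑ S : Finset (Fin n), ∑ i ∈ Sᶜ, f i S := by
  have h1 : ∀ i : Fin n, ((univ : Finset (Fin n)) \ {i}).powerset
      = univ.filter (fun S => i ∉ S) := by
    intro i; ext S
    simp [Finset.subset_sdiff, Finset.disjoint_singleton_right]
  simp_rw [h1, Finset.sum_filter]
  rw [Finset.sum_comm]
  refine Finset.sum_congr rfl fun S _ => ?_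
  rw [← Finset.sum_filter]
  refine Finset.sum_congr ?_ fun _ _ => rfl
  ext i; simp

private lemma lemB (f : Fin n → Finset (Fin n) → ℝ) :
    ∑ i : Fin n, ∑ S ∈ ((univ : Finset (Fin n)) \ {i}).powerset, f i S
      = ∑ T : Finset (Fin n), ∑ i ∈ T, f i (T \ {i}) := by
  rw [lemA, Finset.sum_sigma', Finset.sum_sigma']
  refine Finset.sum_nbij' (fun x => ⟨insert x.2 x.1, x.2⟩) (fun x => ⟨x.1 \ {x.2}, x.2⟩)
    ?_ ?_ ?_ ?_ ?_
  · rintro ⟨S, i⟩ hx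
    simp only [Finset.mem_sigma, Finset.mem_univ, Finset.mem_compl] at hx ⊢
    exact ⟨trivial, Finset.mem_insert_self _ _⟩
  · rintro ⟨T, i⟩ hx
    simp only [Finset.mem_sigma, Finset.mem_univ, Finset.mem_compl] at hx ⊢
    simp [hx.2]
  · rintro ⟨S, i⟩ hx
    simp only [Finset.mem_sigma, Finset.mem_univ, Finset.mem_compl] at hx
    simp [Finset.insert_sdiff_of_mem, hx.2, Finset.sdiff_singleton_eq_erase,
      Finset.erase_insert_eq_erase, Finset.erase_eq_of_notMem hx.2]
  · rintro ⟨T, i⟩ hx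
    simp only [Finset.mem_sigma, Finset.mem_univ, Finset.mem_compl] at hx
    simp [Finset.sdiff_singleton_eq_erase, Finset.insert_erase hx.2]
  · rintro ⟨S, i⟩ hx
    simp [Finset.sdiff_singleton_eq_erase]
    simp only [Finset.mem_sigma, Finset.mem_univ, Finset.mem_compl] at hx
    rw [Finset.erase_eq_of_notMem hx.2]

private lemma keyBB (q : Fin n → Fin m → Finset (Fin n) → Finset (Fin m) → ℝ) :
    (∑ i : Fin n, ∑ j : Fin m, ∑ S ∈ ((univ : Finset (Fin n)) \ {i}).powerset,
        ∑ F ∈ ((univ : Finset (Fin m)) \ {j}).powerset, q i j S F)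
    = ∑ T : Finset (Fin n), ∑ G : Finset (Fin m),
        ∑ i ∈ T, ∑ j ∈ G, q i j (T \ {i}) (G \ {j}) :=
  calc
    _ = ∑ i : Fin n, ∑ S ∈ ((univ : Finset (Fin n)) \ {i}).powerset,
          ∑ j : Fin m, ∑ F ∈ ((univ : Finset (Fin m)) \ {j}).powerset, q i j S F :=
      Finset.sum_congr rfl fun i _ => Finset.sum_comm
    _ = ∑ T : Finset (Fin n), ∑ i ∈ T,
          ∑ j : Fin m, ∑ F ∈ ((univ : Finset (Fin m)) \ {j}).powerset, q i j (T \ {i}) F :=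
      lemB _
    _ = ∑ T : Finset (Fin n), ∑ j : Fin m, ∑ F ∈ ((univ : Finset (Fin m)) \ {j}).powerset,
          ∑ i ∈ T, q i j (T \ {i}) F :=
      Finset.sum_congr rfl fun T _ => by
        rw [Finset.sum_comm]
        exact Finset.sum_congr rfl fun j _ => Finset.sum_comm
    _ = ∑ T : Finset (Fin n), ∑ G : Finset (Fin m), ∑ j ∈ G,
          ∑ i ∈ T, q i j (T \ {i}) (G \ {j}) :=
      Finset.sum_congr rfl fun T _ => lemB _
    _ = _ := Finset.sum_congr rfl fun T _ => Finset.sum_congr rfl fun G _ => Finset.sum_comm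

private lemma keyAA (q : Fin n → Fin m → Finset (Fin n) → Finset (Fin m) → ℝ) :
    (∑ i : Fin n, ∑ j : Fin m, ∑ S ∈ ((univ : Finset (Fin n)) \ {i}).powerset,
        ∑ F ∈ ((univ : Finset (Fin m)) \ {j}).powerset, q i j S F)
    = ∑ T : Finset (Fin n), ∑ G : Finset (Fin m),
        ∑ i ∈ Tᶜ, ∑ j ∈ Gᶜ, q i j T G :=
  calc
    _ = ∑ i : Fin n, ∑ S ∈ ((univ : Finset (Fin n)) \ {i}).powerset,
          ∑ j : Fin m, ∑ F ∈ ((univ : Finset (Fin m)) \ {j}).powerset, q i j S F :=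
      Finset.sum_congr rfl fun i _ => Finset.sum_comm
    _ = ∑ T : Finset (Fin n), ∑ i ∈ Tᶜ,
          ∑ j : Fin m, ∑ F ∈ ((univ : Finset (Fin m)) \ {j}).powerset, q i j T F :=
      lemA _
    _ = ∑ T : Finset (Fin n), ∑ j : Fin m, ∑ F ∈ ((univ : Finset (Fin m)) \ {j}).powerset,
          ∑ i ∈ Tᶜ, q i j T F :=
      Finset.sum_congr rfl fun T _ => by
        rw [Finset.sum_comm]
        exact Finset.sum_congr rfl fun j _ => Finset.sum_comm
    _ = ∑ T : Finset (Fin n), ∑ G : Finset (Fin m), ∑ j ∈ Gᶜ,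
          ∑ i ∈ Tᶜ, q i j T G :=
      Finset.sum_congr rfl fun T _ => lemA _
    _ = _ := Finset.sum_congr rfl fun T _ => Finset.sum_congr rfl fun G _ => Finset.sum_comm

private lemma keyBA (q : Fin n → Fin m → Finset (Fin n) → Finset (Fin m) → ℝ) :
    (∑ i : Fin n, ∑ j : Fin m, ∑ S ∈ ((univ : Finset (Fin n)) \ {i}).powerset,
        ∑ F ∈ ((univ : Finset (Fin m)) \ {j}).powerset, q i j S F)
    = ∑ T : Finset (Fin n), ∑ G : Finset (Fin m),
        ∑ i ∈ T, ∑ j ∈ Gᶜ, q i j (T \ {i}) G :=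
  calc
    _ = ∑ i : Fin n, ∑ S ∈ ((univ : Finset (Fin n)) \ {i}).powerset,
          ∑ j : Fin m, ∑ F ∈ ((univ : Finset (Fin m)) \ {j}).powerset, q i j S F :=
      Finset.sum_congr rfl fun i _ => Finset.sum_comm
    _ = ∑ T : Finset (Fin n), ∑ i ∈ T,
          ∑ j : Fin m, ∑ F ∈ ((univ : Finset (Fin m)) \ {j}).powerset, q i j (T \ {i}) F :=
      lemB _
    _ = ∑ T : Finset (Fin n), ∑ j : Fin m, ∑ F ∈ ((univ : Finset (Fin m)) \ {j}).powerset,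
          ∑ i ∈ T, q i j (T \ {i}) F :=
      Finset.sum_congr rfl fun T _ => by
        rw [Finset.sum_comm]
        exact Finset.sum_congr rfl fun j _ => Finset.sum_comm
    _ = ∑ T : Finset (Fin n), ∑ G : Finset (Fin m), ∑ j ∈ Gᶜ,
          ∑ i ∈ T, q i j (T \ {i}) G :=
      Finset.sum_congr rfl fun T _ => lemA _
    _ = _ := Finset.sum_congr rfl fun T _ => Finset.sum_congr rfl fun G _ => Finset.sum_comm

private lemma keyAB (q : Fin n → Fin m → Finset (Fin n) → Finset (Fin m) → ℝ) :
    (∑ i : Fin n, ∑ j : Fin m, ∑ S ∈ ((univ : Finset (Fin n)) \ {i}).powerset,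
        ∑ F ∈ ((univ : Finset (Fin m)) \ {j}).powerset, q i j S F)
    = ∑ T : Finset (Fin n), ∑ G : Finset (Fin m),
        ∑ i ∈ Tᶜ, ∑ j ∈ G, q i j T (G \ {j}) :=
  calc
    _ = ∑ i : Fin n, ∑ S ∈ ((univ : Finset (Fin n)) \ {i}).powerset,
          ∑ j : Fin m, ∑ F ∈ ((univ : Finset (Fin m)) \ {j}).powerset, q i j S F :=
      Finset.sum_congr rfl fun i _ => Finset.sum_comm
    _ = ∑ T : Finset (Fin n), ∑ i ∈ Tᶜ,
          ∑ j : Fin m, ∑ F ∈ ((univ : Finset (Fin m)) \ {j}).powerset, q i j T F :=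
      lemA _
    _ = ∑ T : Finset (Fin n), ∑ j : Fin m, ∑ F ∈ ((univ : Finset (Fin m)) \ {j}).powerset,
          ∑ i ∈ Tᶜ, q i j T F :=
      Finset.sum_congr rfl fun T _ => by
        rw [Finset.sum_comm]
        exact Finset.sum_congr rfl fun j _ => Finset.sum_comm
    _ = ∑ T : Finset (Fin n), ∑ G : Finset (Fin m), ∑ j ∈ G,
          ∑ i ∈ Tᶜ, q i j T (G \ {j}) :=
      Finset.sum_congr rfl fun T _ => lemB _
    _ = _ := Finset.sum_congr rfl fun T _ => Finset.sum_congr rfl fun G _ => Finset.sum_comm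

/-- The coefficient of `h T G` in the total weighted-marginal sum. -/
private noncomputable def coeff (p : Fin n → Fin m → Finset (Fin n) → Finset (Fin m) → ℝ)
    (T : Finset (Fin n)) (G : Finset (Fin m)) : ℝ :=
  (∑ i ∈ T, ∑ j ∈ G, p i j (T \ {i}) (G \ {j}))
    + (∑ i ∈ Tᶜ, ∑ j ∈ Gᶜ, p i j T G)
    - (∑ i ∈ Tᶜ, ∑ j ∈ G, p i j T (G \ {j}))
    - (∑ i ∈ T, ∑ j ∈ Gᶜ, p i j (T \ {i}) G)

private lemma expand (p : Fin n → Fin m → Finset (Fin n) → Finset (Fin m) → ℝ)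
    (h : Finset (Fin n) → Finset (Fin m) → ℝ) :
    (∑ i : Fin n, ∑ j : Fin m,
      ∑ S ∈ ((univ : Finset (Fin n)) \ {i}).powerset,
        ∑ F ∈ ((univ : Finset (Fin m)) \ {j}).powerset,
          p i j S F * margin h i j S F)
    = ∑ T : Finset (Fin n), ∑ G : Finset (Fin m), coeff p T G * h T G := by
  simp only [margin, mul_add, mul_sub]
  simp only [Finset.sum_add_distrib, Finset.sum_sub_distrib]
  rw [keyBB (fun i j S F => p i j S F * h (insert i S) (insert j F)),
      keyAA (fun i j S F => p i j S F * h S F),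
      keyBA (fun i j S F => p i j S F * h (insert i S) F),
      keyAB (fun i j S F => p i j S F * h S (insert j F))]
  simp only [coeff, add_mul, sub_mul, Finset.sum_mul]
  simp only [Finset.sum_add_distrib, Finset.sum_sub_distrib]
  have hA : ∀ (T : Finset (Fin n)) (G : Finset (Fin m)), ∀ i ∈ T, ∀ j ∈ G,
      h (insert i (T \ {i})) (insert j (G \ {j})) = h T G := by
    intro T G i hi j hj
    rw [Finset.sdiff_singleton_eq_erase, Finset.sdiff_singleton_eq_erase,
      Finset.insert_erase hi, Finset.insert_erase hj]
  have e1 : (∑ T : Finset (Fin n), ∑ G : Finset (Fin m), ∑ i ∈ T, ∑ j ∈ G,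
        p i j (T \ {i}) (G \ {j}) * h (insert i (T \ {i})) (insert j (G \ {j})))
      = ∑ T : Finset (Fin n), ∑ G : Finset (Fin m), ∑ i ∈ T, ∑ j ∈ G,
        p i j (T \ {i}) (G \ {j}) * h T G := by
    refine Finset.sum_congr rfl fun T _ => Finset.sum_congr rfl fun G _ =>
      Finset.sum_congr rfl fun i hi => Finset.sum_congr rfl fun j hj => ?_
    rw [hA T G i hi j hj]
  have e3 : (∑ T : Finset (Fin n), ∑ G : Finset (Fin m), ∑ i ∈ T, ∑ j ∈ Gᶜ,
        p i j (T \ {i}) G * h (insert i (T \ {i})) G)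
      = ∑ T : Finset (Fin n), ∑ G : Finset (Fin m), ∑ i ∈ T, ∑ j ∈ Gᶜ,
        p i j (T \ {i}) G * h T G := by
    refine Finset.sum_congr rfl fun T _ => Finset.sum_congr rfl fun G _ =>
      Finset.sum_congr rfl fun i hi => Finset.sum_congr rfl fun j _ => ?_
    rw [Finset.sdiff_singleton_eq_erase, Finset.insert_erase hi]
  have e4 : (∑ T : Finset (Fin n), ∑ G : Finset (Fin m), ∑ i ∈ Tᶜ, ∑ j ∈ G,
        p i j T (G \ {j}) * h T (insert j (G \ {j})))
      = ∑ T : Finset (Fin n), ∑ G : Finset (Fin m), ∑ i ∈ Tᶜ, ∑ j ∈ G,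
        p i j T (G \ {j}) * h T G := by
    refine Finset.sum_congr rfl fun T _ => Finset.sum_congr rfl fun G _ =>
      Finset.sum_congr rfl fun i _ => Finset.sum_congr rfl fun j hj => ?_
    rw [Finset.sdiff_singleton_eq_erase, Finset.insert_erase hj]
  rw [e1, e3, e4]
  ring

end Aux

/-- Lemma: a weighted-marginal value satisfies 2D-efficiency iff the weight system
satisfies the two combinatorial conditions (a) and (b). -/
theorem efficiency_iff_weight_conditions {n m : ℕ} (hn : 1 ≤ n) (hm : 1 ≤ m)
    (p : Fin n → Fin m → Finset (Fin n) → Finset (Fin m) → ℝ) :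
    (∀ h : Finset (Fin n) → Finset (Fin m) → ℝ,
      ∑ i : Fin n, ∑ j : Fin m,
        (∑ S ∈ (univ \ {i}).powerset, ∑ F ∈ (univ \ {j}).powerset,
          p i j S F * margin h i j S F) = h univ univ) ↔
    ((∑ i : Fin n, ∑ j : Fin m, p i j (univ \ {i}) (univ \ {j}) = 1) ∧
     (∀ (S : Finset (Fin n)) (F : Finset (Fin m)), ¬(S = univ ∧ F = univ) →
       (∑ i ∈ S, ∑ j ∈ F, p i j (S \ {i}) (F \ {j}))
         + (∑ i ∈ Sᶜ, ∑ j ∈ Fᶜ, p i j S F)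
         - (∑ i ∈ Sᶜ, ∑ j ∈ F, p i j S (F \ {j}))
         - (∑ i ∈ S, ∑ j ∈ Fᶜ, p i j (S \ {i}) F) = 0)) := by
  have hcu : coeff p univ univ = ∑ i : Fin n, ∑ j : Fin m, p i j (univ \ {i}) (univ \ {j}) := by
    simp [coeff]
  constructor
  · intro eff
    have hc : ∀ (T₀ : Finset (Fin n)) (G₀ : Finset (Fin m)),
        coeff p T₀ G₀ = if T₀ = univ ∧ G₀ = univ then 1 else 0 := by
      intro T₀ G₀
      have := eff (fun T G => if T = T₀ then (if G = G₀ then (1:ℝ) else 0) else 0)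
      rw [expand] at this
      simp only [mul_ite, mul_one, mul_zero, Finset.sum_ite_eq', Finset.mem_univ,
        if_true] at this
      by_cases hT : T₀ = univ <;> by_cases hG : G₀ = univ <;>
        simp [hT, hG, eq_comm] at this ⊢ <;> simp [this]
    constructor
    · rw [← hcu]
      have := hc univ univ
      simpa using this
    · intro S F hSF
      have := hc S F
      rw [if_neg hSF] at this
      exact this
  · rintro ⟨ha, hb⟩ h
    rw [expand]
    have hz : ∀ (T : Finset (Fin n)) (G : Finset (Fin m)), ¬(T = univ ∧ G = univ) →
        coeff p T G = 0 := fun T G hTG => hb T G hTG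
    rw [Finset.sum_eq_single (univ : Finset (Fin n))]
    · rw [Finset.sum_eq_single (univ : Finset (Fin m))]
      · rw [hcu, ha, one_mul]
      · intro G _ hG
        rw [hz univ G (by simp [hG]), zero_mul]
      · simp
    · intro T _ hT
      apply Finset.sum_eq_zero
      intro G _
      rw [hz T G (by simp [hT]), zero_mul]
    · simp
end

section
/- (Uniqueness of the weight system.) Let n, m ≥ 1 and let p be any real-valued array indexed by (s,f) with 0 ≤ s ≤ n−1, 0 ≤ f ≤ m−1, satisfying: (i) s·f·p_{s−1,f−1} + (n−s)(m−f)·p_{s,f} = (n−s)·f·p_{s,f−1} + s·(m−f)·p_{s−1,f} for all 1 ≤ s ≤ n−1, 1 ≤ f ≤ m−1; (ii) (m−f)·p_{0,f} = f·p_{0,f−1} for all 1 ≤ f ≤ m−1; (iii) (n−s)·p_{s,0} = s·p_{s−1,0} for all 1 ≤ s ≤ n−1; (iv) n·m·p_{n−1,m−1} = 1. Then necessarily p_{s,f} = s!(n−s−1)!·f!(m−f−1)!/(n!·m!) for all 0 ≤ s ≤ n−1, 0 ≤ f ≤ m−1. -/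
open Nat

/-- The weight `p_{s,f} = s!(n−s−1)!·f!(m−f−1)!/(n!·m!)`. -/
noncomputable def pWeight (n m s f : ℕ) : ℝ :=
  ((s ! * (n - s - 1)! * (f ! * (m - f - 1)!) : ℕ) : ℝ) / ((n ! * m ! : ℕ) : ℝ)


lemma fac_ne (n m : ℕ) : ((n ! * m ! : ℕ) : ℝ) ≠ 0 := by
  have := Nat.factorial_pos n
  have := Nat.factorial_pos m
  positivity

lemma hw2' (n m f : ℕ) (hf : 1 ≤ f) (hfm : f ≤ m - 1) (hm : 1 ≤ m) :
    ((m : ℝ) - f) * pWeight n m 0 f = (f : ℝ) * pWeight n m 0 (f - 1) := by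
  obtain ⟨f', rfl⟩ : ∃ f', f = f' + 1 := ⟨f - 1, by omega⟩
  obtain ⟨v, rfl⟩ : ∃ v, m = f' + v + 2 := ⟨m - f' - 2, by omega⟩
  simp only [pWeight, show f' + 1 + 1 - (f' + 1) - 1 = 0 from by omega,
    show f' + v + 2 - (f' + 1) - 1 = v from by omega,
    show f' + 1 - 1 = f' from rfl,
    show f' + v + 2 - f' - 1 = v + 1 from by omega]
  field_simp
  push_cast [Nat.factorial_succ]
  ring

lemma hw3' (n m s : ℕ) (hs : 1 ≤ s) (hsn : s ≤ n - 1) (hn : 1 ≤ n) :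
    ((n : ℝ) - s) * pWeight n m s 0 = (s : ℝ) * pWeight n m (s - 1) 0 := by
  obtain ⟨s', rfl⟩ : ∃ s', s = s' + 1 := ⟨s - 1, by omega⟩
  obtain ⟨u, rfl⟩ : ∃ u, n = s' + u + 2 := ⟨n - s' - 2, by omega⟩
  simp only [pWeight, show s' + u + 2 - (s' + 1) - 1 = u from by omega,
    show s' + 1 - 1 = s' from rfl,
    show s' + u + 2 - s' - 1 = u + 1 from by omega]
  field_simp
  push_cast [Nat.factorial_succ]
  ring

lemma hw1' (n m s f : ℕ) (hs : 1 ≤ s) (hsn : s ≤ n - 1) (hf : 1 ≤ f) (hfm : f ≤ m - 1) :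
    (s : ℝ) * f * pWeight n m (s - 1) (f - 1) + ((n : ℝ) - s) * ((m : ℝ) - f) * pWeight n m s f
    = ((n : ℝ) - s) * f * pWeight n m s (f - 1) + (s : ℝ) * ((m : ℝ) - f) * pWeight n m (s - 1) f := by
  obtain ⟨s', rfl⟩ : ∃ s', s = s' + 1 := ⟨s - 1, by omega⟩
  obtain ⟨u, rfl⟩ : ∃ u, n = s' + u + 2 := ⟨n - s' - 2, by omega⟩
  obtain ⟨f', rfl⟩ : ∃ f', f = f' + 1 := ⟨f - 1, by omega⟩
  obtain ⟨v, rfl⟩ : ∃ v, m = f' + v + 2 := ⟨m - f' - 2, by omega⟩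
  simp only [pWeight, show s' + u + 2 - (s' + 1) - 1 = u from by omega,
    show s' + 1 - 1 = s' from rfl, show f' + 1 - 1 = f' from rfl,
    show s' + u + 2 - s' - 1 = u + 1 from by omega,
    show f' + v + 2 - (f' + 1) - 1 = v from by omega,
    show f' + v + 2 - f' - 1 = v + 1 from by omega]
  field_simp
  push_cast [Nat.factorial_succ]
  ring

lemma hw0' (n m : ℕ) (hn : 1 ≤ n) (hm : 1 ≤ m) :
    (n : ℝ) * m * pWeight n m 0 0 = 1 := by
  obtain ⟨u, rfl⟩ : ∃ u, n = u + 1 := ⟨n - 1, by omega⟩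
  obtain ⟨v, rfl⟩ : ∃ v, m = v + 1 := ⟨m - 1, by omega⟩
  simp only [pWeight, show u + 1 - 0 - 1 = u from by omega,
    show v + 1 - 0 - 1 = v from by omega]
  field_simp
  push_cast [Nat.factorial_succ]
  ring

lemma hw4' (n m : ℕ) (hn : 1 ≤ n) (hm : 1 ≤ m) :
    (n : ℝ) * m * pWeight n m (n - 1) (m - 1) = 1 := by
  obtain ⟨u, rfl⟩ : ∃ u, n = u + 1 := ⟨n - 1, by omega⟩
  obtain ⟨v, rfl⟩ : ∃ v, m = v + 1 := ⟨m - 1, by omega⟩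
  simp only [pWeight, show u + 1 - 1 = u from rfl, show v + 1 - 1 = v from rfl,
    show u + 1 - u - 1 = 0 from by omega, show v + 1 - v - 1 = 0 from by omega]
  field_simp
  push_cast [Nat.factorial_succ]
  ring

/-- Uniqueness of the weight system: any array `p` satisfying the linear recursive
system (i)–(iv) must equal `p_{s,f} = s!(n−s−1)!·f!(m−f−1)!/(n!·m!)` on the grid. -/
theorem weight_system_unique (n m : ℕ) (hn : 1 ≤ n) (hm : 1 ≤ m)
    (p : ℕ → ℕ → ℝ)
    (h1 : ∀ s f : ℕ, 1 ≤ s → s ≤ n - 1 → 1 ≤ f → f ≤ m - 1 →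
      (s : ℝ) * f * p (s - 1) (f - 1) + ((n : ℝ) - s) * ((m : ℝ) - f) * p s f
      = ((n : ℝ) - s) * f * p s (f - 1) + (s : ℝ) * ((m : ℝ) - f) * p (s - 1) f)
    (h2 : ∀ f : ℕ, 1 ≤ f → f ≤ m - 1 →
      ((m : ℝ) - f) * p 0 f = (f : ℝ) * p 0 (f - 1))
    (h3 : ∀ s : ℕ, 1 ≤ s → s ≤ n - 1 →
      ((n : ℝ) - s) * p s 0 = (s : ℝ) * p (s - 1) 0)
    (h4 : (n : ℝ) * m * p (n - 1) (m - 1) = 1) :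
    ∀ s f : ℕ, s ≤ n - 1 → f ≤ m - 1 → p s f = pWeight n m s f := by
  set c : ℝ := (n : ℝ) * m * p 0 0 with hc
  have key : ∀ k s f : ℕ, s + f = k → s ≤ n - 1 → f ≤ m - 1 →
      p s f = c * pWeight n m s f := by
    intro k
    induction k using Nat.strong_induction_on with
    | _ k ih =>
      intro s f hk hs hf
      rcases Nat.eq_zero_or_pos s with rfl | hs1
      · rcases Nat.eq_zero_or_pos f with rfl | hf1
        · have h0 := hw0' n m hn hm
          show p 0 0 = (n : ℝ) * m * p 0 0 * pWeight n m 0 0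
          linear_combination (-(p 0 0)) * h0
        · -- s = 0, f ≥ 1: use h2
          have e1 := h2 f hf1 hf
          have e2 := hw2' n m f hf1 hf hm
          have ihv : p 0 (f - 1) = c * pWeight n m 0 (f - 1) := by
            apply ih (f - 1) (by omega) 0 (f - 1) (by omega) (by omega) (by omega)
          have hmf : (m : ℝ) - f ≠ 0 := by
            have : f < m := by omega
            have : (f : ℝ) < m := by exact_mod_cast this
            linarith
          have : ((m : ℝ) - f) * p 0 f = ((m : ℝ) - f) * (c * pWeight n m 0 f) := by
            rw [e1, ihv]
            linear_combination c * e2.symm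
          exact mul_left_cancel₀ hmf this
      · rcases Nat.eq_zero_or_pos f with rfl | hf1
        · -- f = 0, s ≥ 1: use h3
          have e1 := h3 s hs1 hs
          have e2 := hw3' n m s hs1 hs hn
          have ihv : p (s - 1) 0 = c * pWeight n m (s - 1) 0 := by
            apply ih (s - 1) (by omega) (s - 1) 0 (by omega) (by omega) (by omega)
          have hns : (n : ℝ) - s ≠ 0 := by
            have : s < n := by omega
            have : (s : ℝ) < n := by exact_mod_cast this
            linarith
          have : ((n : ℝ) - s) * p s 0 = ((n : ℝ) - s) * (c * pWeight n m s 0) := by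
            rw [e1, ihv]
            linear_combination c * e2.symm
          exact mul_left_cancel₀ hns this
        · -- interior
          have e1 := h1 s f hs1 hs hf1 hf
          have e2 := hw1' n m s f hs1 hs hf1 hf
          have ih00 : p (s - 1) (f - 1) = c * pWeight n m (s - 1) (f - 1) :=
            ih (s + f - 2) (by omega) _ _ (by omega) (by omega) (by omega)
          have ih10 : p s (f - 1) = c * pWeight n m s (f - 1) :=
            ih (s + f - 1) (by omega) _ _ (by omega) (by omega) (by omega)
          have ih01 : p (s - 1) f = c * pWeight n m (s - 1) f :=
            ih (s + f - 1) (by omega) _ _ (by omega) (by omega) (by omega)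
          have hns : (n : ℝ) - s ≠ 0 := by
            have : s < n := by omega
            have : (s : ℝ) < n := by exact_mod_cast this
            linarith
          have hmf : (m : ℝ) - f ≠ 0 := by
            have : f < m := by omega
            have : (f : ℝ) < m := by exact_mod_cast this
            linarith
          have hne : ((n : ℝ) - s) * ((m : ℝ) - f) ≠ 0 := mul_ne_zero hns hmf
          have : ((n : ℝ) - s) * ((m : ℝ) - f) * p s f
              = ((n : ℝ) - s) * ((m : ℝ) - f) * (c * pWeight n m s f) := by
            rw [ih00, ih10, ih01] at e1
            linear_combination e1 - c * e2
          exact mul_left_cancel₀ hne this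
  have hkey := key
  have hc1 : c = 1 := by
    have := key ((n - 1) + (m - 1)) (n - 1) (m - 1) rfl le_rfl le_rfl
    have h4' := hw4' n m hn hm
    rw [this] at h4
    linear_combination h4 - c * h4'
  intro s f hsn hfm
  rw [key (s + f) s f rfl hsn hfm, hc1, one_mul]
end

section
/- (2D-Shapley value of two-dimensional unanimity games.) Let n, m ≥ 1, N = {1,…,n}, M = {1,…,m}, and fix nonempty A ⊆ N and B ⊆ M. Let h_{A,B} be the utility function with h_{A,B}(W₁,W₂) = 1 if A ⊆ W₁ and B ⊆ W₂, and 0 otherwise. Then the explicit 2D-Shapley value ψ²ᵈ_{ij}(h_{A,B}) := Σ_{S ⊆ N∖{i}} Σ_{F ⊆ M∖{j}} [|S|!(n−|S|−1)!/n!] · [|F|!(m−|F|−1)!/m!] · M_{h_{A,B}}^{i,j}(S,F) satisfies ψ²ᵈ_{ij}(h_{A,B}) = 1/(|A|·|B|) if i ∈ A and j ∈ B, and ψ²ᵈ_{ij}(h_{A,B}) = 0 otherwise. -/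
open Finset Nat

lemma hockey (b : ℕ) : ∀ q, ∑ k ∈ range (q+1), (k+b).choose b = (q+b+1).choose (b+1) := by
  intro q
  induction q with
  | zero => simp
  | succ q ih =>
      rw [Finset.sum_range_succ, ih]
      have e1 : q+1+b = q+b+1 := by ring
      rw [e1]
      exact (Nat.add_comm _ _).trans (Nat.choose_succ_succ _ _).symm

lemma natkey (b q : ℕ) :
    ∑ k ∈ range (q+1), (b+1) * (q.choose k * ((k+b)! * (q-k)!)) = (b+1+q)! := by
  have step : ∀ k ∈ range (q+1), (b+1) * (q.choose k * ((k+b)! * (q-k)!))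
      = (b+1)! * q ! * (k+b).choose b := by
    intro k hk
    have hkq : k ≤ q := by simpa [Nat.lt_succ_iff] using hk
    have h1 : (k+b).choose b * k ! * b ! = (k+b)! := by
      have := Nat.add_choose_mul_factorial_mul_factorial k b
      simpa using this
    have h2 : q.choose k * k ! * (q-k)! = q ! :=
      Nat.choose_mul_factorial_mul_factorial hkq
    calc (b+1) * (q.choose k * ((k+b)! * (q-k)!))
        = (b+1) * (q.choose k * (((k+b).choose b * k ! * b !) * (q-k)!)) := by rw [h1]
      _ = ((b+1) * b !) * (q.choose k * k ! * (q-k)!) * (k+b).choose b := by ring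
      _ = (b+1)! * q ! * (k+b).choose b := by rw [h2, Nat.factorial_succ]
  rw [Finset.sum_congr rfl step, ← Finset.mul_sum, hockey]
  have := Nat.add_choose_mul_factorial_mul_factorial (i := q) (j := b+1)
  have h3 : q + (b+1) = b+1+q := by ring
  rw [h3] at this
  have h4 : q+b+1 = b+1+q := by ring
  rw [h4]
  calc (b+1)! * q ! * (b+1+q).choose (b+1) = (b+1+q).choose (b+1) * q ! * (b+1)! := by ring
    _ = (b+1+q)! := this

lemma realkey {n a : ℕ} (ha : 1 ≤ a) (han : a ≤ n) :
    ∑ k ∈ range (n - a + 1), ((n-a).choose k : ℝ) * shapWeight n (k + (a-1)) = 1 / a := by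
  obtain ⟨b, rfl⟩ : ∃ b, a = b + 1 := ⟨a - 1, by omega⟩
  set q := n - (b+1) with hq
  have hn : n = b + 1 + q := by omega
  have cast1 : ∀ k ∈ range (q+1), ((q.choose k : ℝ)) * shapWeight n (k + (b+1-1))
      = (q.choose k * ((k+b)! * (q-k)!) : ℕ) / ((n)! : ℕ) := by
    intro k hk
    have hkq : k ≤ q := by simpa [Nat.lt_succ_iff] using hk
    have h1 : k + (b+1-1) = k + b := by omega
    have h2 : n - (k+b) - 1 = q - k := by omega
    rw [h1, shapWeight, h2]
    push_cast
    ring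
  rw [Finset.sum_congr rfl cast1, ← Finset.sum_div, ← Nat.cast_sum]
  have hnat := natkey b q
  have : ∑ k ∈ range (q+1), q.choose k * ((k+b)! * (q-k)!) * (b+1) = (b+1+q)! := by
    rw [← hnat]; apply Finset.sum_congr rfl; intro k _; ring
  have hne : ((b:ℝ)+1) ≠ 0 := by positivity
  have hfac : ((n ! : ℕ) : ℝ) ≠ 0 := by
    exact_mod_cast Nat.factorial_ne_zero n
  rw [eq_div_iff (by push_cast; exact hne), div_mul_eq_mul_div, div_eq_one_iff_eq hfac]
  rw [hn]
  rw [← Finset.sum_mul] at this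
  exact_mod_cast this

lemma oneD {n : ℕ} (A : Finset (Fin n)) (hA : A.Nonempty) (i : Fin n) :
    ∑ S ∈ ((univ : Finset (Fin n)) \ {i}).powerset,
      shapWeight n S.card * ((if A ⊆ insert i S then (1:ℝ) else 0) - (if A ⊆ S then 1 else 0))
      = if i ∈ A then 1 / (A.card : ℝ) else 0 := by
  by_cases hi : i ∈ A
  · rw [if_pos hi]
    have key : ∀ S ∈ ((univ : Finset (Fin n)) \ {i}).powerset,
        shapWeight n S.card * ((if A ⊆ insert i S then (1:ℝ) else 0) - (if A ⊆ S then 1 else 0))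
        = if A.erase i ⊆ S then shapWeight n S.card else 0 := by
      intro S hS
      rw [Finset.mem_powerset] at hS
      have hiS : i ∉ S := fun h => by have := hS h; simp at this
      have hnAS : ¬ A ⊆ S := fun h => hiS (h hi)
      simp only [Finset.subset_insert_iff, if_neg hnAS]
      split_ifs <;> ring
    rw [Finset.sum_congr rfl key, ← Finset.sum_filter]
    have hUA : ((univ : Finset (Fin n)) \ {i}) \ A.erase i = univ \ A := by
      ext x
      simp only [mem_sdiff, mem_univ, mem_singleton, mem_erase, true_and, not_and, not_not]
      constructor
      · rintro ⟨hx1, hx2⟩ hxA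
        exact absurd (hx2 hx1) (by simp [hxA])
      · intro hxA
        have hxi : x ≠ i := fun h => hxA (h ▸ hi)
        exact ⟨hxi, fun _ h => absurd h hxA⟩
    have hbij : ∑ S ∈ ((univ : Finset (Fin n)) \ {i}).powerset.filter (A.erase i ⊆ ·),
        shapWeight n S.card
        = ∑ T ∈ ((univ : Finset (Fin n)) \ A).powerset, shapWeight n (T.card + (A.card - 1)) := by
      apply Finset.sum_nbij' (fun S => S \ A.erase i) (fun T => T ∪ A.erase i)
      · intro S hS
        rw [Finset.mem_filter, Finset.mem_powerset] at hS
        rw [Finset.mem_powerset, ← hUA]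
        exact Finset.sdiff_subset_sdiff hS.1 le_rfl
      · intro T hT
        rw [Finset.mem_powerset, ← hUA] at hT
        rw [Finset.mem_filter, Finset.mem_powerset]
        refine ⟨Finset.union_subset (hT.trans Finset.sdiff_subset) ?_, Finset.subset_union_right⟩
        intro x hx
        simp only [mem_sdiff, mem_univ, mem_singleton, true_and]
        rw [Finset.mem_erase] at hx
        exact hx.1
      · intro S hS
        rw [Finset.mem_filter] at hS
        exact Finset.sdiff_union_of_subset hS.2
      · intro T hT
        rw [Finset.mem_powerset, ← hUA] at hT
        apply Finset.union_sdiff_cancel_right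
        rw [Finset.disjoint_left]
        intro x hx hx2
        exact (Finset.mem_sdiff.mp (hT hx)).2 hx2
      · intro S hS
        rw [Finset.mem_filter] at hS
        congr 1
        have := Finset.card_sdiff_add_card_eq_card hS.2
        have hcA : (A.erase i).card = A.card - 1 := Finset.card_erase_of_mem hi
        omega
    rw [hbij, Finset.sum_powerset]
    have hcard : ((univ : Finset (Fin n)) \ A).card = n - A.card := by
      rw [Finset.card_sdiff_of_subset (Finset.subset_univ A)]
      simp
    have inner : ∀ k ∈ range (((univ : Finset (Fin n)) \ A).card + 1),
        ∑ T ∈ Finset.powersetCard k ((univ : Finset (Fin n)) \ A),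
          shapWeight n (T.card + (A.card - 1))
        = ((n - A.card).choose k : ℝ) * shapWeight n (k + (A.card - 1)) := by
      intro k hk
      rw [Finset.sum_congr rfl (fun T hT => by
        rw [(Finset.mem_powersetCard.mp hT).2]), Finset.sum_const, Finset.card_powersetCard,
        hcard, nsmul_eq_mul]
    rw [Finset.sum_congr rfl inner, hcard]
    exact realkey hA.card_pos (by simpa using Finset.card_le_univ A)
  · rw [if_neg hi]
    apply Finset.sum_eq_zero
    intro S hS
    simp only [Finset.subset_insert_iff_of_notMem hi]
    ring

/-- The 2D-Shapley value of the two-dimensional unanimity game `h_{A,B}`: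
`1/(|A|·|B|)` on blocks `(i,j) ∈ A × B`, and `0` elsewhere. -/
theorem psi2d_unanimity {n m : ℕ} (hn : 1 ≤ n) (hm : 1 ≤ m)
    (A : Finset (Fin n)) (B : Finset (Fin m)) (hA : A.Nonempty) (hB : B.Nonempty)
    (i : Fin n) (j : Fin m) :
    psi2d (fun W₁ W₂ => if A ⊆ W₁ ∧ B ⊆ W₂ then (1 : ℝ) else 0) i j =
      if i ∈ A ∧ j ∈ B then 1 / ((A.card : ℝ) * (B.card : ℝ)) else 0 := by
  have hfact : psi2d (fun W₁ W₂ => if A ⊆ W₁ ∧ B ⊆ W₂ then (1 : ℝ) else 0) i j =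
      (∑ S ∈ ((univ : Finset (Fin n)) \ {i}).powerset,
        shapWeight n S.card * ((if A ⊆ insert i S then (1:ℝ) else 0) - (if A ⊆ S then 1 else 0)))
      * (∑ F ∈ ((univ : Finset (Fin m)) \ {j}).powerset,
        shapWeight m F.card * ((if B ⊆ insert j F then (1:ℝ) else 0) - (if B ⊆ F then 1 else 0))) := by
    rw [psi2d, Finset.sum_mul_sum]
    apply Finset.sum_congr rfl
    intro S _
    apply Finset.sum_congr rfl
    intro F _
    rw [margin]
    have e : ∀ (P : Prop) [Decidable P] (Q : Prop) [Decidable Q],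
        (if P ∧ Q then (1:ℝ) else 0) = (if P then (1:ℝ) else 0) * (if Q then 1 else 0) := by
      intro P _ Q _
      by_cases hP : P <;> by_cases hQ : Q <;> simp [hP, hQ]
    simp only [e]
    ring
  rw [hfact, oneD A hA i, oneD B hB j]
  by_cases hiA : i ∈ A <;> by_cases hjB : j ∈ B <;>
    simp [hiA, hjB, one_div, mul_inv, mul_comm]
end

section
/- (Cancellation of Dirac-game values under linearity and dummy.) Let n, m ≥ 1, N = {1,…,n}, M = {1,…,m}, and suppose ψ satisfies 2D-linearity and 2D-dummy. For A ⊆ N, B ⊆ M, let W_{A,B} be the utility function with W_{A,B}(W₁,W₂) = 1 if W₁ = A and W₂ = B, and 0 otherwise. Then for every (i,j) ∈ N × M, every S ⊆ N∖{i}, and every F ⊆ M∖{j}: ψ_{ij}(W_{S∪{i}, F}) + ψ_{ij}(W_{S, F}) = 0, and likewise ψ_{ij}(W_{S, F∪{j}}) + ψ_{ij}(W_{S, F}) = 0. -/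
open Finset Nat

/-- Cancellation of Dirac-game values under 2D-linearity and 2D-dummy. -/
theorem dirac_cancellation {n m : ℕ} (hn : 1 ≤ n) (hm : 1 ≤ m)
    (ψ : (Finset (Fin n) → Finset (Fin m) → ℝ) → Fin n → Fin m → ℝ)
    (hlin : ∀ (h₁ h₂ : Finset (Fin n) → Finset (Fin m) → ℝ) (β₁ β₂ : ℝ)
      (i : Fin n) (j : Fin m),
      ψ (fun S F => β₁ * h₁ S F + β₂ * h₂ S F) i j = β₁ * ψ h₁ i j + β₂ * ψ h₂ i j)
    (hdummy : ∀ (h : Finset (Fin n) → Finset (Fin m) → ℝ) (i : Fin n) (j : Fin m) (c : ℝ),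
      (∀ (S : Finset (Fin n)) (F : Finset (Fin m)), i ∉ S → j ∉ F →
        margin h i j S F = c) → ψ h i j = c) :
    ∀ (i : Fin n) (j : Fin m) (S : Finset (Fin n)) (F : Finset (Fin m)),
      i ∉ S → j ∉ F →
      (ψ (dirac (insert i S) F) i j + ψ (dirac S F) i j = 0 ∧
       ψ (dirac S (insert j F)) i j + ψ (dirac S F) i j = 0) := by

  intro i j S F hiS hjF
  have main : ∀ (g₁ g₂ : Finset (Fin n) → Finset (Fin m) → ℝ),
      (∀ (S' : Finset (Fin n)) (F' : Finset (Fin m)), i ∉ S' → j ∉ F' →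
        margin g₁ i j S' F' + margin g₂ i j S' F' = 0) →
      ψ g₁ i j + ψ g₂ i j = 0 := by
    intro g₁ g₂ hmar
    have h0 : ψ (fun W₁ W₂ => (1:ℝ) * g₁ W₁ W₂ + 1 * g₂ W₁ W₂) i j = 0 := by
      apply hdummy
      intro S' F' hiS' hjF'
      have := hmar S' F' hiS' hjF'
      simp only [margin, one_mul] at *
      linarith
    have h1 := hlin g₁ g₂ 1 1 i j
    rw [h0] at h1
    linarith
  constructor
  · apply main
    intro S' F' hiS' hjF'
    have hF : insert j F' ≠ F := fun h => hjF (h ▸ mem_insert_self j F')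
    have hS1 : S' ≠ insert i S := fun h => hiS' (h ▸ mem_insert_self i S)
    have hS2 : insert i S' ≠ S := fun h => hiS (h ▸ mem_insert_self i S')
    have hS3 : insert i S' = insert i S ↔ S' = S := by
      constructor
      · intro h
        have := congrArg (Finset.erase · i) h
        simpa [Finset.erase_insert hiS', Finset.erase_insert hiS] using this
      · intro h; rw [h]
    simp only [margin, dirac]
    have hSi : S ≠ insert i S := fun h => hiS (h ▸ mem_insert_self i S)
    by_cases hSS : S' = S <;> by_cases hFF : F' = F <;>
      simp [hF, hS1, hS2, hS3, hSS, hFF, hiS, hjF, hSi]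
  · apply main
    intro S' F' hiS' hjF'
    have hS : insert i S' ≠ S := fun h => hiS (h ▸ mem_insert_self i S')
    have hF1 : F' ≠ insert j F := fun h => hjF' (h ▸ mem_insert_self j F)
    have hF2 : insert j F' ≠ F := fun h => hjF (h ▸ mem_insert_self j F')
    have hF3 : insert j F' = insert j F ↔ F' = F := by
      constructor
      · intro h
        have := congrArg (Finset.erase · j) h
        simpa [Finset.erase_insert hjF', Finset.erase_insert hjF] using this
      · intro h; rw [h]
    simp only [margin, dirac]
    have hFj : F ≠ insert j F := fun h => hjF (h ▸ mem_insert_self j F)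
    by_cases hSS : S' = S <;> by_cases hFF : F' = F <;>
      simp [hS, hF1, hF2, hF3, hSS, hFF, hiS, hjF, hFj]
end
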